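/- arXiv:2603.13551 — 2 statements merged into one kernel-verified Lean document; each statement's English description precedes it below -/
import Mathlib

section
/- Let L be a pseudo-Finsler Lagrangian on Ω with spray nonlinear connection N. Let U ⊆ ℝ^m be open, let u : U → ℝ^m be smooth with (x,u(x)) ∈ Ω for all x ∈ U, and let X : U → ℝ^m be a smooth vector field. Then at every point of U one has (1/2)·∂_X(g_u(u,u)) = g_u(u, D_X u), and moreover g_u(u, D_X u) = ∂_u(g_u(u,X)) − g_u(D̃_u u, X) + g_u(u, [X,u]). -/
open scoped BigOperators

noncomputable section

/-- `Vec m` is the model space `ℝ^m`. -/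
abbrev Vec (m : ℕ) : Type := Fin m → ℝ

variable {m : ℕ}

/-- Partial derivative in the velocity (second) variable: `∂f/∂v^i (x,v)`. -/
def pdv (f : Vec m → Vec m → ℝ) (i : Fin m) (x v : Vec m) : ℝ :=
  fderiv ℝ (f x) v (Pi.single i 1)

/-- Partial derivative in the position (first) variable: `∂f/∂x^i (x,v)`. -/
def pdx (f : Vec m → Vec m → ℝ) (i : Fin m) (x v : Vec m) : ℝ :=
  fderiv ℝ (fun y => f y v) x (Pi.single i 1)

/-- Vertical Hessian `g_{αβ}(x,v) = ∂²L/∂v^α∂v^β` of the Lagrangian. -/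
def gmet (L : Vec m → Vec m → ℝ) (x v : Vec m) : Matrix (Fin m) (Fin m) ℝ :=
  Matrix.of fun α β => pdv (pdv L β) α x v

/-- Inverse metric `g^{αβ}` (nonsingular matrix inverse). -/
def ginv (L : Vec m → Vec m → ℝ) (x v : Vec m) : Matrix (Fin m) (Fin m) ℝ :=
  (gmet L x v)⁻¹

/-- Geodesic spray coefficients
`G^α = (1/4) g^{αδ}(∂g_{δγ}/∂x^β + ∂g_{δβ}/∂x^γ − ∂g_{βγ}/∂x^δ) v^β v^γ`. -/
def spray (L : Vec m → Vec m → ℝ) (α : Fin m) (x v : Vec m) : ℝ :=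
  (1/4) * ∑ δ, ginv L x v α δ *
    (∑ β, ∑ γ,
      (pdx (fun y w => gmet L y w δ γ) β x v
        + pdx (fun y w => gmet L y w δ β) γ x v
        - pdx (fun y w => gmet L y w β γ) δ x v) * v β * v γ)

/-- The spray nonlinear connection `N^α_μ = ∂G^α/∂v^μ`. -/
def nConn (L : Vec m → Vec m → ℝ) (α μ : Fin m) (x v : Vec m) : ℝ :=
  pdv (spray L α) μ x v

/-- Horizontal derivative `δ_μ f = ∂f/∂x^μ − N^ν_μ ∂f/∂v^ν` for a nonlinear connection `N`. -/
def hderiv (N : Fin m → Fin m → Vec m → Vec m → ℝ) (f : Vec m → Vec m → ℝ)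
    (μ : Fin m) (x v : Vec m) : ℝ :=
  pdx f μ x v - ∑ ν, N ν μ x v * pdv f ν x v

/-- Curvature of the nonlinear connection: `R^μ_{αβ} = δ_α N^μ_β − δ_β N^μ_α`. -/
def curv (N : Fin m → Fin m → Vec m → Vec m → ℝ) (μ α β : Fin m) (x v : Vec m) : ℝ :=
  hderiv N (N μ β) α x v - hderiv N (N μ α) β x v

/-- Ricci scalar `Ric(v) = R^μ{}_{μα} v^α`. -/
def ricciScalar (N : Fin m → Fin m → Vec m → Vec m → ℝ) (x v : Vec m) : ℝ :=
  ∑ α, (∑ μ, curv N μ μ α x v) * v α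

/-- Ricci 1-form component `(Ric_v)_α = R^μ{}_{μα}`. -/
def ricciOne (N : Fin m → Fin m → Vec m → Vec m → ℝ) (α : Fin m) (x v : Vec m) : ℝ :=
  ∑ μ, curv N μ μ α x v

/-- `χ_α := (∂R^γ{}_{αν}/∂v^γ) v^ν`. -/
def chiForm (N : Fin m → Fin m → Vec m → Vec m → ℝ) (α : Fin m) (x v : Vec m) : ℝ :=
  ∑ γ, ∑ ν, pdv (curv N γ α ν) γ x v * v ν

/-- Partial derivative `∂u^α/∂x^μ` of a vector field on the base. -/
def pde (u : Vec m → Vec m) (α μ : Fin m) (x : Vec m) : ℝ :=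
  fderiv ℝ (fun y => u y α) x (Pi.single μ 1)

/-- Covariant derivative `(D_X u)^α = (∂u^α/∂x^μ + N^α_μ(x,u(x))) X^μ`. -/
def covD (L : Vec m → Vec m → ℝ) (u X : Vec m → Vec m) (x : Vec m) : Vec m :=
  fun α => ∑ μ, (pde u α μ x + nConn L α μ x (u x)) * X x μ

/-- Flipped derivative `(D̃_u X)^α = (∂X^α/∂x^μ) u^μ + N^α_μ(x,u(x)) X^μ`. -/
def flipD (L : Vec m → Vec m → ℝ) (u X : Vec m → Vec m) (x : Vec m) : Vec m :=
  fun α => (∑ μ, pde X α μ x * u x μ) + ∑ μ, nConn L α μ x (u x) * X x μ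

/-- Lie bracket `[X,Y]^α = X^μ ∂Y^α/∂x^μ − Y^μ ∂X^α/∂x^μ`. -/
def lieB (X Y : Vec m → Vec m) (x : Vec m) : Vec m :=
  fun α => ∑ μ, (X x μ * pde Y α μ x - Y x μ * pde X α μ x)

/-- Scalar product `g_u(X,Y)(x) = g_{αβ}(x,u(x)) X^α Y^β`. -/
def gProd (L : Vec m → Vec m → ℝ) (u X Y : Vec m → Vec m) (x : Vec m) : ℝ :=
  ∑ α, ∑ β, gmet L x (u x) α β * X x α * Y x β

/-- Directional derivative `∂_X f = X^μ ∂f/∂x^μ`. -/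
def dirD (X : Vec m → Vec m) (f : Vec m → ℝ) (x : Vec m) : ℝ :=
  ∑ μ, X x μ * fderiv ℝ f x (Pi.single μ 1)


open Topology Filter

-- basic: apply a CLM to a vector via coordinates
lemma clm_apply_vec (T : Vec m →L[ℝ] ℝ) (v : Vec m) :
    T v = ∑ i, v i * T (Pi.single i 1) := by
  have hv : v = ∑ i, v i • (Pi.single i 1 : Vec m) := by
    funext j
    simp [Finset.sum_apply, Pi.single_apply]
  conv_lhs => rw [hv]
  rw [map_sum]
  simp [smul_eq_mul]

lemma prod_split (T : (Vec m × Vec m) →L[ℝ] ℝ) (a b : Vec m) :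
    T (a, b) = T (a, 0) + T (0, b) := by
  rw [← map_add]; norm_num

lemma prod_split2 (T : (Vec m × Vec m) →L[ℝ] ℝ) (a b : Vec m) :
    T (a, b) = T (a, 0) + ∑ i, b i * T (0, Pi.single i 1) := by
  rw [prod_split]
  congr 1
  have : ((0 : Vec m), b) = (ContinuousLinearMap.inr ℝ (Vec m) (Vec m)) b := rfl
  rw [this, ← ContinuousLinearMap.comp_apply, clm_apply_vec]
  rfl

section reprs
variable {Ω : Set (Vec m × Vec m)} {f : Vec m → Vec m → ℝ} {x v : Vec m}

lemma diffAt_unc (hΩ : IsOpen Ω) (hf : ContDiffOn ℝ (⊤ : ℕ∞) (fun p : Vec m × Vec m => f p.1 p.2) Ω)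
    (hp : (x, v) ∈ Ω) : DifferentiableAt ℝ (fun p : Vec m × Vec m => f p.1 p.2) (x, v) :=
  ((hf.contDiffAt (hΩ.mem_nhds hp)).differentiableAt (by norm_num))

lemma hasFDerivAt_slice_v (hΩ : IsOpen Ω)
    (hf : ContDiffOn ℝ (⊤ : ℕ∞) (fun p : Vec m × Vec m => f p.1 p.2) Ω) (hp : (x, v) ∈ Ω) :
    HasFDerivAt (f x)
      ((fderiv ℝ (fun p : Vec m × Vec m => f p.1 p.2) (x, v)).comp
        (ContinuousLinearMap.inr ℝ (Vec m) (Vec m))) v := by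
  have hF := (diffAt_unc hΩ hf hp).hasFDerivAt
  have hg : HasFDerivAt (fun w : Vec m => ((x, w) : Vec m × Vec m))
      (ContinuousLinearMap.inr ℝ (Vec m) (Vec m)) v := by
    exact ((hasFDerivAt_const x v).prodMk (hasFDerivAt_id v))
  exact hF.comp v hg

lemma hasFDerivAt_slice_x (hΩ : IsOpen Ω)
    (hf : ContDiffOn ℝ (⊤ : ℕ∞) (fun p : Vec m × Vec m => f p.1 p.2) Ω) (hp : (x, v) ∈ Ω) :
    HasFDerivAt (fun y => f y v)
      ((fderiv ℝ (fun p : Vec m × Vec m => f p.1 p.2) (x, v)).comp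
        (ContinuousLinearMap.inl ℝ (Vec m) (Vec m))) x := by
  have hF := (diffAt_unc hΩ hf hp).hasFDerivAt
  have hg : HasFDerivAt (fun y : Vec m => ((y, v) : Vec m × Vec m))
      (ContinuousLinearMap.inl ℝ (Vec m) (Vec m)) x := by
    exact ((hasFDerivAt_id x).prodMk (hasFDerivAt_const v x))
  exact hF.comp x hg

lemma pdv_repr (hΩ : IsOpen Ω)
    (hf : ContDiffOn ℝ (⊤ : ℕ∞) (fun p : Vec m × Vec m => f p.1 p.2) Ω) (hp : (x, v) ∈ Ω)
    (i : Fin m) :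
    pdv f i x v = fderiv ℝ (fun p : Vec m × Vec m => f p.1 p.2) (x, v) (0, Pi.single i 1) := by
  rw [pdv, (hasFDerivAt_slice_v hΩ hf hp).fderiv]; rfl

lemma pdx_repr (hΩ : IsOpen Ω)
    (hf : ContDiffOn ℝ (⊤ : ℕ∞) (fun p : Vec m × Vec m => f p.1 p.2) Ω) (hp : (x, v) ∈ Ω)
    (i : Fin m) :
    pdx f i x v = fderiv ℝ (fun p : Vec m × Vec m => f p.1 p.2) (x, v) (Pi.single i 1, 0) := by
  rw [pdx, (hasFDerivAt_slice_x hΩ hf hp).fderiv]; rfl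

lemma diffAt_slice_v (hΩ : IsOpen Ω)
    (hf : ContDiffOn ℝ (⊤ : ℕ∞) (fun p : Vec m × Vec m => f p.1 p.2) Ω) (hp : (x, v) ∈ Ω) :
    DifferentiableAt ℝ (f x) v := (hasFDerivAt_slice_v hΩ hf hp).differentiableAt

lemma diffAt_slice_x (hΩ : IsOpen Ω)
    (hf : ContDiffOn ℝ (⊤ : ℕ∞) (fun p : Vec m × Vec m => f p.1 p.2) Ω) (hp : (x, v) ∈ Ω) :
    DifferentiableAt ℝ (fun y => f y v) x := (hasFDerivAt_slice_x hΩ hf hp).differentiableAt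

-- smoothness of the uncurried partial derivatives
lemma contDiffOn_fderiv_unc (hΩ : IsOpen Ω)
    (hf : ContDiffOn ℝ (⊤ : ℕ∞) (fun p : Vec m × Vec m => f p.1 p.2) Ω) :
    ContDiffOn ℝ (⊤ : ℕ∞) (fderiv ℝ (fun p : Vec m × Vec m => f p.1 p.2)) Ω :=
  hf.fderiv_of_isOpen hΩ (by norm_num)

lemma pdv_unc_smooth (hΩ : IsOpen Ω)
    (hf : ContDiffOn ℝ (⊤ : ℕ∞) (fun p : Vec m × Vec m => f p.1 p.2) Ω) (i : Fin m) :
    ContDiffOn ℝ (⊤ : ℕ∞) (fun p : Vec m × Vec m => pdv f i p.1 p.2) Ω := by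
  have h1 : ContDiffOn ℝ (⊤ : ℕ∞)
      (fun p : Vec m × Vec m =>
        fderiv ℝ (fun q : Vec m × Vec m => f q.1 q.2) p ((0 : Vec m), Pi.single i 1)) Ω := by
    exact (ContinuousLinearMap.apply ℝ ℝ ((0 : Vec m), (Pi.single i 1 : Vec m))).contDiff.comp_contDiffOn
      (contDiffOn_fderiv_unc hΩ hf)
  exact h1.congr (fun p hp => by rw [pdv_repr hΩ hf (by simpa using hp) i])

lemma pdx_unc_smooth (hΩ : IsOpen Ω)
    (hf : ContDiffOn ℝ (⊤ : ℕ∞) (fun p : Vec m × Vec m => f p.1 p.2) Ω) (i : Fin m) :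
    ContDiffOn ℝ (⊤ : ℕ∞) (fun p : Vec m × Vec m => pdx f i p.1 p.2) Ω := by
  have h1 : ContDiffOn ℝ (⊤ : ℕ∞)
      (fun p : Vec m × Vec m =>
        fderiv ℝ (fun q : Vec m × Vec m => f q.1 q.2) p ((Pi.single i 1 : Vec m), (0 : Vec m))) Ω := by
    exact (ContinuousLinearMap.apply ℝ ℝ ((Pi.single i 1 : Vec m), (0 : Vec m))).contDiff.comp_contDiffOn
      (contDiffOn_fderiv_unc hΩ hf)
  exact h1.congr (fun p hp => by rw [pdx_repr hΩ hf (by simpa using hp) i])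

end reprs

section second
variable {Ω : Set (Vec m × Vec m)} {f : Vec m → Vec m → ℝ} {x v : Vec m}

/-- derivative of `p ↦ fderiv F p c` along a map into the product space. -/
lemma fderiv_apply_const_slice_v (hΩ : IsOpen Ω)
    (hf : ContDiffOn ℝ (⊤ : ℕ∞) (fun p : Vec m × Vec m => f p.1 p.2) Ω) (hp : (x, v) ∈ Ω)
    (c : Vec m × Vec m) (j : Fin m) :
    fderiv ℝ (fun w => fderiv ℝ (fun p : Vec m × Vec m => f p.1 p.2) (x, w) c) v (Pi.single j 1)
      = fderiv ℝ (fderiv ℝ (fun p : Vec m × Vec m => f p.1 p.2)) (x, v) (0, Pi.single j 1) c := by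
  set F := fun p : Vec m × Vec m => f p.1 p.2
  have hH : DifferentiableAt ℝ (fderiv ℝ F) (x, v) :=
    ((contDiffOn_fderiv_unc hΩ hf).contDiffAt (hΩ.mem_nhds hp)).differentiableAt (by norm_num)
  have hg : HasFDerivAt (fun w : Vec m => ((x, w) : Vec m × Vec m))
      (ContinuousLinearMap.inr ℝ (Vec m) (Vec m)) v := by
    exact ((hasFDerivAt_const x v).prodMk (hasFDerivAt_id v))
  have h2 : HasFDerivAt (fun w : Vec m => fderiv ℝ F (x, w))
      ((fderiv ℝ (fderiv ℝ F) (x, v)).comp (ContinuousLinearMap.inr ℝ (Vec m) (Vec m))) v :=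
    hH.hasFDerivAt.comp v hg
  have h3 := h2.clm_apply (hasFDerivAt_const c v)
  rw [h3.fderiv]
  simp

lemma fderiv_apply_const_slice_x (hΩ : IsOpen Ω)
    (hf : ContDiffOn ℝ (⊤ : ℕ∞) (fun p : Vec m × Vec m => f p.1 p.2) Ω) (hp : (x, v) ∈ Ω)
    (c : Vec m × Vec m) (j : Fin m) :
    fderiv ℝ (fun y => fderiv ℝ (fun p : Vec m × Vec m => f p.1 p.2) (y, v) c) x (Pi.single j 1)
      = fderiv ℝ (fderiv ℝ (fun p : Vec m × Vec m => f p.1 p.2)) (x, v) (Pi.single j 1, 0) c := by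
  set F := fun p : Vec m × Vec m => f p.1 p.2
  have hH : DifferentiableAt ℝ (fderiv ℝ F) (x, v) :=
    ((contDiffOn_fderiv_unc hΩ hf).contDiffAt (hΩ.mem_nhds hp)).differentiableAt (by norm_num)
  have hg : HasFDerivAt (fun y : Vec m => ((y, v) : Vec m × Vec m))
      (ContinuousLinearMap.inl ℝ (Vec m) (Vec m)) x := by
    exact ((hasFDerivAt_id x).prodMk (hasFDerivAt_const v x))
  have h2 : HasFDerivAt (fun y : Vec m => fderiv ℝ F (y, v))
      ((fderiv ℝ (fderiv ℝ F) (x, v)).comp (ContinuousLinearMap.inl ℝ (Vec m) (Vec m))) x :=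
    hH.hasFDerivAt.comp x hg
  have h3 := h2.clm_apply (hasFDerivAt_const c x)
  rw [h3.fderiv]
  simp

lemma symm2 (hΩ : IsOpen Ω)
    (hf : ContDiffOn ℝ (⊤ : ℕ∞) (fun p : Vec m × Vec m => f p.1 p.2) Ω) (hp : (x, v) ∈ Ω)
    (a b : Vec m × Vec m) :
    fderiv ℝ (fderiv ℝ (fun p : Vec m × Vec m => f p.1 p.2)) (x, v) a b
      = fderiv ℝ (fderiv ℝ (fun p : Vec m × Vec m => f p.1 p.2)) (x, v) b a := by
  have := (hf.contDiffAt (hΩ.mem_nhds hp)).isSymmSndFDerivAt (n := ((⊤ : ℕ∞) : WithTop ℕ∞)) (by simp; exact WithTop.coe_le_coe.mpr le_top)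
  exact this a b

lemma pdv_pdv_repr (hΩ : IsOpen Ω)
    (hf : ContDiffOn ℝ (⊤ : ℕ∞) (fun p : Vec m × Vec m => f p.1 p.2) Ω) (hp : (x, v) ∈ Ω)
    (α β : Fin m) :
    pdv (pdv f β) α x v
      = fderiv ℝ (fderiv ℝ (fun p : Vec m × Vec m => f p.1 p.2)) (x, v)
          (0, Pi.single α 1) (0, Pi.single β 1) := by
  have hmem : ∀ᶠ w in 𝓝 v, (x, w) ∈ Ω := by
    have : IsOpen {w : Vec m | (x, w) ∈ Ω} := hΩ.preimage (by fun_prop)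
    exact this.mem_nhds hp
  have heq : (fun w => pdv f β x w) =ᶠ[𝓝 v]
      (fun w => fderiv ℝ (fun p : Vec m × Vec m => f p.1 p.2) (x, w) (0, Pi.single β 1)) := by
    filter_upwards [hmem] with w hw
    exact pdv_repr hΩ hf hw β
  rw [pdv, heq.fderiv_eq, fderiv_apply_const_slice_v hΩ hf hp]

lemma pdv_pdx_repr (hΩ : IsOpen Ω)
    (hf : ContDiffOn ℝ (⊤ : ℕ∞) (fun p : Vec m × Vec m => f p.1 p.2) Ω) (hp : (x, v) ∈ Ω)
    (μ β : Fin m) :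
    pdv (pdx f β) μ x v
      = fderiv ℝ (fderiv ℝ (fun p : Vec m × Vec m => f p.1 p.2)) (x, v)
          (0, Pi.single μ 1) (Pi.single β 1, 0) := by
  have hmem : ∀ᶠ w in 𝓝 v, (x, w) ∈ Ω := by
    have : IsOpen {w : Vec m | (x, w) ∈ Ω} := hΩ.preimage (by fun_prop)
    exact this.mem_nhds hp
  have heq : (fun w => pdx f β x w) =ᶠ[𝓝 v]
      (fun w => fderiv ℝ (fun p : Vec m × Vec m => f p.1 p.2) (x, w) (Pi.single β 1, 0)) := by
    filter_upwards [hmem] with w hw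
    exact pdx_repr hΩ hf hw β
  rw [pdv, heq.fderiv_eq, fderiv_apply_const_slice_v hΩ hf hp]

lemma pdx_pdv_repr (hΩ : IsOpen Ω)
    (hf : ContDiffOn ℝ (⊤ : ℕ∞) (fun p : Vec m × Vec m => f p.1 p.2) Ω) (hp : (x, v) ∈ Ω)
    (β μ : Fin m) :
    pdx (pdv f μ) β x v
      = fderiv ℝ (fderiv ℝ (fun p : Vec m × Vec m => f p.1 p.2)) (x, v)
          (Pi.single β 1, 0) (0, Pi.single μ 1) := by
  have hmem : ∀ᶠ y in 𝓝 x, (y, v) ∈ Ω := by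
    have : IsOpen {y : Vec m | (y, v) ∈ Ω} := hΩ.preimage (by fun_prop)
    exact this.mem_nhds hp
  have heq : (fun y => pdv f μ y v) =ᶠ[𝓝 x]
      (fun y => fderiv ℝ (fun p : Vec m × Vec m => f p.1 p.2) (y, v) (0, Pi.single μ 1)) := by
    filter_upwards [hmem] with y hy
    exact pdv_repr hΩ hf hy μ
  rw [pdx, heq.fderiv_eq, fderiv_apply_const_slice_x hΩ hf hp]

lemma pdv_pdv_symm (hΩ : IsOpen Ω)
    (hf : ContDiffOn ℝ (⊤ : ℕ∞) (fun p : Vec m × Vec m => f p.1 p.2) Ω) (hp : (x, v) ∈ Ω)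
    (α β : Fin m) : pdv (pdv f β) α x v = pdv (pdv f α) β x v := by
  rw [pdv_pdv_repr hΩ hf hp, pdv_pdv_repr hΩ hf hp, symm2 hΩ hf hp]

lemma pdv_pdx_symm (hΩ : IsOpen Ω)
    (hf : ContDiffOn ℝ (⊤ : ℕ∞) (fun p : Vec m × Vec m => f p.1 p.2) Ω) (hp : (x, v) ∈ Ω)
    (μ β : Fin m) : pdv (pdx f β) μ x v = pdx (pdv f μ) β x v := by
  rw [pdv_pdx_repr hΩ hf hp, pdx_pdv_repr hΩ hf hp, symm2 hΩ hf hp]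

end second

section euler
variable {Ω : Set (Vec m × Vec m)} {f : Vec m → Vec m → ℝ} {x v : Vec m}

/-- Euler's identity at a point, from local homogeneity along the ray. -/
lemma eulerAt {f : Vec m → ℝ} {v : Vec m} (hf : DifferentiableAt ℝ f v) (d : ℕ)
    (hh : ∀ s : ℝ, 0 < s → f (s • v) = s ^ d * f v) :
    ∑ i, v i * fderiv ℝ f v (Pi.single i 1) = d * f v := by
  have hc : HasDerivAt (fun s : ℝ => s • v) v 1 := by
    simpa using (hasDerivAt_id (1 : ℝ)).smul_const v
  have h1 : HasDerivAt (fun s : ℝ => f (s • v)) (fderiv ℝ f v v) 1 := by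
    have hf' : HasFDerivAt f (fderiv ℝ f v) ((1:ℝ) • v) := by
      simpa using hf.hasFDerivAt
    have := hf'.comp_hasDerivAt 1 hc
    exact this
  have h2 : HasDerivAt (fun s : ℝ => s ^ d * f v) ((d : ℝ) * f v) 1 := by
    simpa using (hasDerivAt_pow d (1 : ℝ)).mul_const (f v)
  have heq : (fun s : ℝ => f (s • v)) =ᶠ[𝓝 (1 : ℝ)] (fun s : ℝ => s ^ d * f v) := by
    filter_upwards [eventually_gt_nhds zero_lt_one] with s hs
    exact hh s hs
  have h1' : HasDerivAt (fun s : ℝ => s ^ d * f v) (fderiv ℝ f v v) 1 :=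
    (heq.hasDerivAt_iff).1 h1
  have : fderiv ℝ f v v = (d : ℝ) * f v := h1'.unique h2
  rw [← this, clm_apply_vec]

/-- the vertical derivative of a `d`-homogeneous function is `(d-1)`-homogeneous,
in the scaled form `s * pdv f i x (s•v) = s^d * pdv f i x v`. -/
lemma pdv_homog (hΩ : IsOpen Ω)
    (hf : ContDiffOn ℝ (⊤ : ℕ∞) (fun p : Vec m × Vec m => f p.1 p.2) Ω)
    (hcone : ∀ p ∈ Ω, ∀ s : ℝ, 0 < s → (p.1, s • p.2) ∈ Ω) (d : ℕ)
    (hh : ∀ p ∈ Ω, ∀ s : ℝ, 0 < s → f p.1 (s • p.2) = s ^ d * f p.1 p.2)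
    (hp : (x, v) ∈ Ω) {s : ℝ} (hs : 0 < s) (i : Fin m) :
    s * pdv f i x (s • v) = s ^ d * pdv f i x v := by
  have hps : (x, s • v) ∈ Ω := hcone (x, v) hp s hs
  have hmem : ∀ᶠ w in 𝓝 v, (x, w) ∈ Ω := by
    have : IsOpen {w : Vec m | (x, w) ∈ Ω} := hΩ.preimage (by fun_prop)
    exact this.mem_nhds hp
  have hd1 : DifferentiableAt ℝ (f x) (s • v) := diffAt_slice_v hΩ hf hps
  have hsc : HasFDerivAt (fun w : Vec m => s • w) (s • ContinuousLinearMap.id ℝ (Vec m)) v := by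
    exact (ContinuousLinearMap.id ℝ (Vec m)).hasFDerivAt.const_smul s
  have h1 : HasFDerivAt (fun w => f x (s • w))
      ((fderiv ℝ (f x) (s • v)).comp (s • ContinuousLinearMap.id ℝ (Vec m))) v :=
    hd1.hasFDerivAt.comp v hsc
  have h2 : HasFDerivAt (fun w => s ^ d * f x w) (s ^ d • fderiv ℝ (f x) v) v :=
    (diffAt_slice_v hΩ hf hp).hasFDerivAt.const_mul (s ^ d)
  have heq : (fun w => f x (s • w)) =ᶠ[𝓝 v] (fun w => s ^ d * f x w) := by
    filter_upwards [hmem] with w hw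
    exact hh (x, w) hw s hs
  have h1' : HasFDerivAt (fun w => s ^ d * f x w)
      ((fderiv ℝ (f x) (s • v)).comp (s • ContinuousLinearMap.id ℝ (Vec m))) v :=
    (heq.hasFDerivAt_iff).1 h1
  have hE := h1'.unique h2
  have := congrFun (congrArg DFunLike.coe hE) (Pi.single i 1)
  simpa [pdv, mul_comm] using this

/-- Euler on Ω for a function homogeneous of degree d (in the scalar form). -/
lemma eulerOn (hΩ : IsOpen Ω)
    (hf : ContDiffOn ℝ (⊤ : ℕ∞) (fun p : Vec m × Vec m => f p.1 p.2) Ω) (d : ℕ)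
    (hh : ∀ p ∈ Ω, ∀ s : ℝ, 0 < s → f p.1 (s • p.2) = s ^ d * f p.1 p.2)
    (hp : (x, v) ∈ Ω) :
    ∑ i, v i * pdv f i x v = d * f x v := by
  have := eulerAt (diffAt_slice_v hΩ hf hp) d (fun s hs => hh (x, v) hp s hs)
  simpa [pdv] using this

end euler


section finsler
variable {Ω : Set (Vec m × Vec m)} {L : Vec m → Vec m → ℝ} {x v : Vec m}
variable (hΩ : IsOpen Ω)
  (hcone : ∀ p ∈ Ω, ∀ s : ℝ, 0 < s → (p.1, s • p.2) ∈ Ω)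
  (hL : ContDiffOn ℝ (⊤ : ℕ∞) (fun p : Vec m × Vec m => L p.1 p.2) Ω)
  (hLhom : ∀ p ∈ Ω, ∀ s : ℝ, 0 < s → L p.1 (s • p.2) = s ^ 2 * L p.1 p.2)

include hΩ hL

lemma ell_smooth (i : Fin m) :
    ContDiffOn ℝ (⊤ : ℕ∞) (fun p : Vec m × Vec m => pdv L i p.1 p.2) Ω :=
  pdv_unc_smooth hΩ hL i

lemma gmet_smooth (α β : Fin m) :
    ContDiffOn ℝ (⊤ : ℕ∞) (fun p : Vec m × Vec m => gmet L p.1 p.2 α β) Ω :=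
  pdv_unc_smooth hΩ (ell_smooth hΩ hL β) α

lemma pdxg_smooth (α β γ : Fin m) :
    ContDiffOn ℝ (⊤ : ℕ∞)
      (fun p : Vec m × Vec m => pdx (fun y w => gmet L y w α β) γ p.1 p.2) Ω :=
  pdx_unc_smooth hΩ (gmet_smooth hΩ hL α β) γ

lemma pdxL_smooth (β : Fin m) :
    ContDiffOn ℝ (⊤ : ℕ∞) (fun p : Vec m × Vec m => pdx L β p.1 p.2) Ω :=
  pdx_unc_smooth hΩ hL β

include hLhom

lemma ell_hom (hp : (x, v) ∈ Ω) (hc : ∀ p ∈ Ω, ∀ s : ℝ, 0 < s → (p.1, s • p.2) ∈ Ω)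
    {s : ℝ} (hs : 0 < s) (i : Fin m) :
    pdv L i x (s • v) = s * pdv L i x v := by
  have := pdv_homog hΩ hL hc 2 hLhom hp hs i
  have hs' := hs.ne'
  field_simp at this
  nlinarith [this]

lemma gmet_hom (hp : (x, v) ∈ Ω) (hc : ∀ p ∈ Ω, ∀ s : ℝ, 0 < s → (p.1, s • p.2) ∈ Ω)
    {s : ℝ} (hs : 0 < s) (α β : Fin m) :
    gmet L x (s • v) α β = gmet L x v α β := by
  have h1 : ∀ p ∈ Ω, ∀ s : ℝ, 0 < s → pdv L β p.1 (s • p.2) = s ^ 1 * pdv L β p.1 p.2 := by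
    intro p hp s hs
    rw [pow_one]
    exact ell_hom hΩ hL hLhom hp hc hs β
  have := pdv_homog hΩ (ell_smooth hΩ hL β) hc 1 h1 hp hs α
  rw [pow_one] at this
  have h2 : pdv (pdv L β) α x (s • v) = pdv (pdv L β) α x v :=
    mul_left_cancel₀ hs.ne' this
  simpa [gmet] using h2

lemma euler_L (hp : (x, v) ∈ Ω) :
    ∑ i, v i * pdv L i x v = 2 * L x v := by
  have := eulerOn hΩ hL 2 hLhom hp
  simpa using this

lemma euler_g (hp : (x, v) ∈ Ω) (hc : ∀ p ∈ Ω, ∀ s : ℝ, 0 < s → (p.1, s • p.2) ∈ Ω)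
    (β : Fin m) :
    ∑ γ, v γ * gmet L x v γ β = pdv L β x v := by
  have h1 : ∀ p ∈ Ω, ∀ s : ℝ, 0 < s → pdv L β p.1 (s • p.2) = s ^ 1 * pdv L β p.1 p.2 := by
    intro p hp s hs
    rw [pow_one]
    exact ell_hom hΩ hL hLhom hp hc hs β
  have := eulerOn hΩ (ell_smooth hΩ hL β) 1 h1 hp
  simpa [gmet] using this

omit hLhom

lemma gmet_symm (hp : (x, v) ∈ Ω) (α β : Fin m) :
    gmet L x v α β = gmet L x v β α := by
  simpa [gmet] using pdv_pdv_symm hΩ hL hp α β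

include hLhom

lemma euler_g' (hp : (x, v) ∈ Ω) (hc : ∀ p ∈ Ω, ∀ s : ℝ, 0 < s → (p.1, s • p.2) ∈ Ω)
    (β : Fin m) :
    ∑ γ, gmet L x v β γ * v γ = pdv L β x v := by
  rw [← euler_g hΩ hL hLhom hp hc β]
  exact Finset.sum_congr rfl fun γ _ => by rw [gmet_symm hΩ hL hp β γ, mul_comm]

lemma g_vv (hp : (x, v) ∈ Ω) (hc : ∀ p ∈ Ω, ∀ s : ℝ, 0 < s → (p.1, s • p.2) ∈ Ω) :
    ∑ α, ∑ β, gmet L x v α β * v α * v β = 2 * L x v := by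
  calc ∑ α, ∑ β, gmet L x v α β * v α * v β
      = ∑ α, v α * (∑ β, gmet L x v α β * v β) := by
        refine Finset.sum_congr rfl fun α _ => ?_
        rw [Finset.mul_sum]
        exact Finset.sum_congr rfl fun β _ => by ring
    _ = ∑ α, v α * pdv L α x v := by
        refine Finset.sum_congr rfl fun α _ => ?_
        rw [euler_g' hΩ hL hLhom hp hc α]
    _ = 2 * L x v := euler_L hΩ hL hLhom hp

end finsler

section tools
variable {Ω : Set (Vec m × Vec m)} {x v : Vec m}

lemma fderiv_proj (i : Fin m) (v : Vec m) :
    fderiv ℝ (fun w : Vec m => w i) v = ContinuousLinearMap.proj i := by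
  exact (ContinuousLinearMap.proj i : Vec m →L[ℝ] ℝ).fderiv

lemma diff_proj (i : Fin m) (v : Vec m) :
    DifferentiableAt ℝ (fun w : Vec m => w i) v :=
  (ContinuousLinearMap.proj i : Vec m →L[ℝ] ℝ).differentiableAt

/-- contraction with constants passes through `pdx`. -/
lemma pdx_contract (hΩ : IsOpen Ω) {ι : Type*} [Fintype ι] {h : ι → Vec m → Vec m → ℝ}
    (hh : ∀ i, ContDiffOn ℝ (⊤ : ℕ∞) (fun p : Vec m × Vec m => h i p.1 p.2) Ω)
    (c : ι → ℝ) (A : Vec m → Vec m → ℝ) (hp : (x, v) ∈ Ω)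
    (heq : ∀ y, (y, v) ∈ Ω → ∑ i, c i * h i y v = A y v) (β : Fin m) :
    ∑ i, c i * pdx (h i) β x v = pdx A β x v := by
  have hmem : ∀ᶠ y in 𝓝 x, (y, v) ∈ Ω := by
    have : IsOpen {y : Vec m | (y, v) ∈ Ω} := hΩ.preimage (by fun_prop)
    exact this.mem_nhds hp
  have hEq : (fun y => A y v) =ᶠ[𝓝 x] (fun y => ∑ i, c i * h i y v) := by
    filter_upwards [hmem] with y hy
    exact (heq y hy).symm
  have hdiff : ∀ i ∈ Finset.univ, DifferentiableAt ℝ (fun y => c i * h i y v) x :=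
    fun i _ => (diffAt_slice_x hΩ (hh i) hp).const_mul (c i)
  rw [show pdx A β x v = fderiv ℝ (fun y => A y v) x (Pi.single β 1) from rfl,
    hEq.fderiv_eq, fderiv_fun_sum hdiff]
  rw [ContinuousLinearMap.sum_apply]
  refine Finset.sum_congr rfl fun i _ => ?_
  rw [fderiv_const_mul (diffAt_slice_x hΩ (hh i) hp)]
  rfl

end tools

section cartan
variable {Ω : Set (Vec m × Vec m)} {L : Vec m → Vec m → ℝ} {x v : Vec m}
variable (hΩ : IsOpen Ω)
  (hL : ContDiffOn ℝ (⊤ : ℕ∞) (fun p : Vec m × Vec m => L p.1 p.2) Ω)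
  (hLhom : ∀ p ∈ Ω, ∀ s : ℝ, 0 < s → L p.1 (s • p.2) = s ^ 2 * L p.1 p.2)
include hΩ hL hLhom

lemma cartan_v (hp : (x, v) ∈ Ω) (hc : ∀ p ∈ Ω, ∀ s : ℝ, 0 < s → (p.1, s • p.2) ∈ Ω)
    (ν β : Fin m) :
    ∑ α, v α * pdv (fun y w => gmet L y w α β) ν x v = 0 := by
  have hmem : ∀ᶠ w in 𝓝 v, (x, w) ∈ Ω := by
    have : IsOpen {w : Vec m | (x, w) ∈ Ω} := hΩ.preimage (by fun_prop)
    exact this.mem_nhds hp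
  have hgd : ∀ α, DifferentiableAt ℝ (fun w => gmet L x w α β) v :=
    fun α => diffAt_slice_v (f := fun y w => gmet L y w α β) hΩ (gmet_smooth hΩ hL α β) hp
  have hdiff : ∀ α ∈ Finset.univ, DifferentiableAt ℝ (fun w => w α * gmet L x w α β) v :=
    fun α _ => (diff_proj α v).mul (hgd α)
  have hEq : (fun w => pdv L β x w) =ᶠ[𝓝 v] (fun w => ∑ α, w α * gmet L x w α β) := by
    filter_upwards [hmem] with w hw
    exact (euler_g hΩ hL hLhom hw hc β).symm
  have h1 : fderiv ℝ (fun w => pdv L β x w) v (Pi.single ν 1)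
      = ∑ α, (v α * pdv (fun y w => gmet L y w α β) ν x v
          + gmet L x v α β * (Pi.single ν 1 : Vec m) α) := by
    rw [hEq.fderiv_eq, fderiv_fun_sum hdiff, ContinuousLinearMap.sum_apply]
    refine Finset.sum_congr rfl fun α _ => ?_
    rw [fderiv_fun_mul (diff_proj α v) (hgd α)]
    have : fderiv ℝ (fun w : Vec m => w α) v (Pi.single ν 1) = (Pi.single ν 1 : Vec m) α := by
      rw [fderiv_proj]; rfl
    simp only [ContinuousLinearMap.add_apply, ContinuousLinearMap.smul_apply, smul_eq_mul, this]
    rfl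
  have h2 : fderiv ℝ (fun w => pdv L β x w) v (Pi.single ν 1) = gmet L x v ν β := rfl
  have h3 : ∑ α, (v α * pdv (fun y w => gmet L y w α β) ν x v
      + gmet L x v α β * (Pi.single ν 1 : Vec m) α)
      = (∑ α, v α * pdv (fun y w => gmet L y w α β) ν x v) + gmet L x v ν β := by
    rw [Finset.sum_add_distrib]
    congr 1
    have : ∀ α, gmet L x v α β * (Pi.single ν 1 : Vec m) α
        = if α = ν then gmet L x v α β else 0 := by
      intro α
      by_cases h : α = ν <;> simp [Pi.single_apply, h]
    rw [Finset.sum_congr rfl fun α _ => this α, Finset.sum_ite_eq' Finset.univ ν]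
    simp
  have := h2.symm.trans h1
  rw [h3] at this
  linarith

end cartan

section ginvsmooth
variable {Ω : Set (Vec m × Vec m)} {L : Vec m → Vec m → ℝ} {x v : Vec m}

lemma contDiffOn_finprod {ι : Type*} {E : Type*} [NormedAddCommGroup E] [NormedSpace ℝ E]
    {t : Set E} (s : Finset ι) (f : ι → E → ℝ)
    (h : ∀ i ∈ s, ContDiffOn ℝ (⊤ : ℕ∞) (f i) t) :
    ContDiffOn ℝ (⊤ : ℕ∞) (fun x => ∏ i ∈ s, f i x) t := by
  classical
  induction s using Finset.induction_on with
  | empty => simpa using contDiffOn_const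
  | insert a s' hni ih =>
    simp only [Finset.prod_insert hni]
    exact (h a (Finset.mem_insert_self a s')).mul
      (ih fun i hi => h i (Finset.mem_insert_of_mem hi))

variable (hΩ : IsOpen Ω)
  (hL : ContDiffOn ℝ (⊤ : ℕ∞) (fun p : Vec m × Vec m => L p.1 p.2) Ω)
include hΩ hL

lemma det_smooth :
    ContDiffOn ℝ (⊤ : ℕ∞) (fun p : Vec m × Vec m => (gmet L p.1 p.2).det) Ω := by
  have : (fun p : Vec m × Vec m => (gmet L p.1 p.2).det)
      = fun p => ∑ σ : Equiv.Perm (Fin m),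
          (Equiv.Perm.sign σ : ℝ) * ∏ i, gmet L p.1 p.2 (σ i) i := by
    funext p
    rw [Matrix.det_apply']
  rw [this]
  refine ContDiffOn.sum fun σ _ => ContDiffOn.mul contDiffOn_const ?_
  exact contDiffOn_finprod Finset.univ _ fun i _ => gmet_smooth hΩ hL (σ i) i

lemma adj_smooth (α δ : Fin m) :
    ContDiffOn ℝ (⊤ : ℕ∞) (fun p : Vec m × Vec m => (gmet L p.1 p.2).adjugate α δ) Ω := by
  have : (fun p : Vec m × Vec m => (gmet L p.1 p.2).adjugate α δ)
      = fun p => ∑ σ : Equiv.Perm (Fin m), (Equiv.Perm.sign σ : ℝ) *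
          ∏ i, (if σ i = δ then (Pi.single α 1 : Vec m) i else gmet L p.1 p.2 (σ i) i) := by
    funext p
    rw [Matrix.adjugate_apply, Matrix.det_apply']
    refine Finset.sum_congr rfl fun σ _ => ?_
    congr 1
    refine Finset.prod_congr rfl fun i _ => ?_
    rw [Matrix.updateRow_apply]
  rw [this]
  refine ContDiffOn.sum fun σ _ => ContDiffOn.mul contDiffOn_const ?_
  refine contDiffOn_finprod Finset.univ _ fun i _ => ?_
  by_cases h : σ i = δ
  · simp only [h, if_true]; exact contDiffOn_const
  · simp only [h, if_false]; exact gmet_smooth hΩ hL (σ i) i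

omit hΩ hL
lemma ginv_apply (L : Vec m → Vec m → ℝ) (x v : Vec m) (α δ : Fin m) :
    ginv L x v α δ = ((gmet L x v).det)⁻¹ * (gmet L x v).adjugate α δ := by
  rw [ginv, Matrix.inv_def, Ring.inverse_eq_inv']
  rfl
include hΩ hL

lemma ginv_smooth (hLinv : ∀ p ∈ Ω, IsUnit (gmet L p.1 p.2).det) (α δ : Fin m) :
    ContDiffOn ℝ (⊤ : ℕ∞) (fun p : Vec m × Vec m => ginv L p.1 p.2 α δ) Ω := by
  have h1 : ContDiffOn ℝ (⊤ : ℕ∞) (fun p : Vec m × Vec m => ((gmet L p.1 p.2).det)⁻¹) Ω :=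
    (det_smooth hΩ hL).inv fun p hp => (isUnit_iff_ne_zero.1 (hLinv p hp))
  have := h1.mul (adj_smooth hΩ hL α δ)
  exact this.congr fun p hp => by rw [ginv_apply]

end ginvsmooth

/-- The Christoffel-type inner sum of the spray. -/
def Tsum (L : Vec m → Vec m → ℝ) (δ : Fin m) (x v : Vec m) : ℝ :=
  ∑ β, ∑ γ,
      (pdx (fun y w => gmet L y w δ γ) β x v
        + pdx (fun y w => gmet L y w δ β) γ x v
        - pdx (fun y w => gmet L y w β γ) δ x v) * v β * v γ

lemma spray_def' (L : Vec m → Vec m → ℝ) (α : Fin m) (x v : Vec m) :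
    spray L α x v = (1/4) * ∑ δ, ginv L x v α δ * Tsum L δ x v := rfl

section spraysec
variable {Ω : Set (Vec m × Vec m)} {L : Vec m → Vec m → ℝ} {x v : Vec m}

lemma pdx_const_mul (hΩ : IsOpen Ω)
    (hL : ContDiffOn ℝ (⊤ : ℕ∞) (fun p : Vec m × Vec m => L p.1 p.2) Ω)
    (c : ℝ) (hp : (x, v) ∈ Ω) (δ : Fin m) :
    pdx (fun y w => c * L y w) δ x v = c * pdx L δ x v := by
  rw [pdx, pdx, fderiv_const_mul (diffAt_slice_x hΩ hL hp)]
  rfl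

lemma spray_contract (hLinv : ∀ p ∈ Ω, IsUnit (gmet L p.1 p.2).det)
    (hp : (x, v) ∈ Ω) (δ : Fin m) :
    ∑ α, gmet L x v δ α * spray L α x v = (1/4) * Tsum L δ x v := by
  have hmul : gmet L x v * ginv L x v = 1 := Matrix.mul_nonsing_inv _ (hLinv (x, v) hp)
  calc ∑ α, gmet L x v δ α * spray L α x v
      = ∑ α, ∑ δ', (1/4) * (gmet L x v δ α * ginv L x v α δ' * Tsum L δ' x v) := by
        refine Finset.sum_congr rfl fun α _ => ?_
        rw [spray_def', Finset.mul_sum, Finset.mul_sum]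
        exact Finset.sum_congr rfl fun δ' _ => by ring
    _ = ∑ δ', (1/4) * ((∑ α, gmet L x v δ α * ginv L x v α δ') * Tsum L δ' x v) := by
        rw [Finset.sum_comm]
        refine Finset.sum_congr rfl fun δ' _ => ?_
        rw [Finset.sum_mul, Finset.mul_sum]
    _ = ∑ δ', (1/4) * ((1 : Matrix (Fin m) (Fin m) ℝ) δ δ' * Tsum L δ' x v) := by
        refine Finset.sum_congr rfl fun δ' _ => ?_
        rw [← Matrix.mul_apply, hmul]
    _ = (1/4) * Tsum L δ x v := by
        simp [Matrix.one_apply, Finset.sum_ite_eq]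

lemma Tsum_eq (hΩ : IsOpen Ω)
    (hL : ContDiffOn ℝ (⊤ : ℕ∞) (fun p : Vec m × Vec m => L p.1 p.2) Ω)
    (hLhom : ∀ p ∈ Ω, ∀ s : ℝ, 0 < s → L p.1 (s • p.2) = s ^ 2 * L p.1 p.2)
    (hcone : ∀ p ∈ Ω, ∀ s : ℝ, 0 < s → (p.1, s • p.2) ∈ Ω)
    (hp : (x, v) ∈ Ω) (δ : Fin m) :
    Tsum L δ x v
      = 2 * (∑ β, v β * pdx (fun y w => pdv L δ y w) β x v) - 2 * pdx L δ x v := by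
  have hS1 : ∀ β, ∑ γ, v γ * pdx (fun y w => gmet L y w δ γ) β x v
      = pdx (fun y w => pdv L δ y w) β x v := by
    intro β
    refine pdx_contract hΩ (fun γ => gmet_smooth hΩ hL δ γ) (fun γ => v γ)
      (fun y w => pdv L δ y w) hp (fun y hy => ?_) β
    show ∑ γ, v γ * gmet L y v δ γ = pdv L δ y v
    rw [← euler_g' hΩ hL hLhom hy hcone δ]
    exact Finset.sum_congr rfl fun γ _ => mul_comm _ _
  have hS3 : ∑ q : Fin m × Fin m, (v q.1 * v q.2) *
        pdx (fun y w => gmet L y w q.1 q.2) δ x v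
      = 2 * pdx L δ x v := by
    rw [pdx_contract hΩ (fun q : Fin m × Fin m => gmet_smooth hΩ hL q.1 q.2)
      (fun q => v q.1 * v q.2) (fun y w => 2 * L y w) hp (fun y hy => ?_) δ]
    · exact pdx_const_mul hΩ hL 2 hp δ
    · show ∑ q : Fin m × Fin m, (v q.1 * v q.2) * gmet L y v q.1 q.2 = 2 * L y v
      rw [Fintype.sum_prod_type]
      rw [← g_vv hΩ hL hLhom hy hcone]
      exact Finset.sum_congr rfl fun β _ => Finset.sum_congr rfl fun γ _ => by ring
  have expand : Tsum L δ x v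
      = (∑ β, ∑ γ, pdx (fun y w => gmet L y w δ γ) β x v * v β * v γ)
        + (∑ β, ∑ γ, pdx (fun y w => gmet L y w δ β) γ x v * v β * v γ)
        - (∑ β, ∑ γ, pdx (fun y w => gmet L y w β γ) δ x v * v β * v γ) := by
    rw [Tsum]
    conv_rhs => rw [← Finset.sum_add_distrib, ← Finset.sum_sub_distrib]
    refine Finset.sum_congr rfl fun β _ => ?_
    conv_rhs => rw [← Finset.sum_add_distrib, ← Finset.sum_sub_distrib]
    exact Finset.sum_congr rfl fun γ _ => by ring
  have hswap : (∑ β, ∑ γ, pdx (fun y w => gmet L y w δ β) γ x v * v β * v γ)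
      = ∑ β, ∑ γ, pdx (fun y w => gmet L y w δ γ) β x v * v β * v γ := by
    rw [Finset.sum_comm]
    exact Finset.sum_congr rfl fun β _ => Finset.sum_congr rfl fun γ _ => by ring
  have hfirst : (∑ β, ∑ γ, pdx (fun y w => gmet L y w δ γ) β x v * v β * v γ)
      = ∑ β, v β * pdx (fun y w => pdv L δ y w) β x v := by
    refine Finset.sum_congr rfl fun β _ => ?_
    rw [← hS1 β, Finset.mul_sum]
    exact Finset.sum_congr rfl fun γ _ => by ring
  have hthird : (∑ β, ∑ γ, pdx (fun y w => gmet L y w β γ) δ x v * v β * v γ)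
      = 2 * pdx L δ x v := by
    rw [← hS3, Fintype.sum_prod_type]
    exact Finset.sum_congr rfl fun β _ => Finset.sum_congr rfl fun γ _ => by ring
  rw [expand, hswap, hfirst, hthird]
  ring

lemma spray_eqn (hΩ : IsOpen Ω)
    (hL : ContDiffOn ℝ (⊤ : ℕ∞) (fun p : Vec m × Vec m => L p.1 p.2) Ω)
    (hLhom : ∀ p ∈ Ω, ∀ s : ℝ, 0 < s → L p.1 (s • p.2) = s ^ 2 * L p.1 p.2)
    (hcone : ∀ p ∈ Ω, ∀ s : ℝ, 0 < s → (p.1, s • p.2) ∈ Ω)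
    (hLinv : ∀ p ∈ Ω, IsUnit (gmet L p.1 p.2).det)
    (hp : (x, v) ∈ Ω) (δ : Fin m) :
    ∑ α, gmet L x v δ α * spray L α x v
      = (1/2) * (∑ β, v β * pdx (fun y w => pdv L δ y w) β x v)
        - (1/2) * pdx L δ x v := by
  rw [spray_contract hLinv hp δ, Tsum_eq hΩ hL hLhom hcone hp δ]
  ring

end spraysec

section sprayhom
variable {Ω : Set (Vec m × Vec m)} {L : Vec m → Vec m → ℝ} {x v : Vec m}
variable (hΩ : IsOpen Ω)
  (hL : ContDiffOn ℝ (⊤ : ℕ∞) (fun p : Vec m × Vec m => L p.1 p.2) Ω)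
  (hLhom : ∀ p ∈ Ω, ∀ s : ℝ, 0 < s → L p.1 (s • p.2) = s ^ 2 * L p.1 p.2)
  (hcone : ∀ p ∈ Ω, ∀ s : ℝ, 0 < s → (p.1, s • p.2) ∈ Ω)
  (hLinv : ∀ p ∈ Ω, IsUnit (gmet L p.1 p.2).det)

include hΩ hL hLhom hcone in
lemma gmat_hom (hp : (x, v) ∈ Ω) {s : ℝ} (hs : 0 < s) :
    gmet L x (s • v) = gmet L x v := by
  ext α β
  exact gmet_hom hΩ hL hLhom hp hcone hs α β

include hΩ hL hLhom hcone in
lemma pdxg_hom (hp : (x, v) ∈ Ω) {s : ℝ} (hs : 0 < s) (α β γ : Fin m) :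
    pdx (fun y w => gmet L y w α β) γ x (s • v)
      = pdx (fun y w => gmet L y w α β) γ x v := by
  have hmem : ∀ᶠ y in 𝓝 x, (y, v) ∈ Ω := by
    have : IsOpen {y : Vec m | (y, v) ∈ Ω} := hΩ.preimage (by fun_prop)
    exact this.mem_nhds hp
  have heq : (fun y => gmet L y (s • v) α β) =ᶠ[𝓝 x] (fun y => gmet L y v α β) := by
    filter_upwards [hmem] with y hy
    exact gmet_hom hΩ hL hLhom hy hcone hs α β
  rw [pdx, pdx, heq.fderiv_eq]

include hΩ hL hLhom hcone in
lemma spray_hom (hp : (x, v) ∈ Ω) {s : ℝ} (hs : 0 < s) (α : Fin m) :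
    spray L α x (s • v) = s ^ 2 * spray L α x v := by
  have hgi : ginv L x (s • v) = ginv L x v := by
    rw [ginv, ginv, gmat_hom hΩ hL hLhom hcone hp hs]
  have hT : ∀ δ, Tsum L δ x (s • v) = s ^ 2 * Tsum L δ x v := by
    intro δ
    rw [Tsum, Tsum, Finset.mul_sum]
    refine Finset.sum_congr rfl fun β _ => ?_
    rw [Finset.mul_sum]
    refine Finset.sum_congr rfl fun γ _ => ?_
    rw [pdxg_hom hΩ hL hLhom hcone hp hs δ γ β, pdxg_hom hΩ hL hLhom hcone hp hs δ β γ,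
      pdxg_hom hΩ hL hLhom hcone hp hs β γ δ]
    have h1 : (s • v) β = s * v β := rfl
    have h2 : (s • v) γ = s * v γ := rfl
    rw [h1, h2]
    ring
  rw [spray_def', spray_def', hgi, Finset.mul_sum, Finset.mul_sum, Finset.mul_sum]
  refine Finset.sum_congr rfl fun δ _ => ?_
  rw [hT δ]
  ring

include hΩ hL hLinv in
lemma spray_slice_diff (hp : (x, v) ∈ Ω) (α : Fin m) :
    DifferentiableAt ℝ (fun w => spray L α x w) v := by
  have hgi : ∀ δ, DifferentiableAt ℝ (fun w => ginv L x w α δ) v := fun δ =>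
    diffAt_slice_v (f := fun y w => ginv L y w α δ) hΩ (ginv_smooth hΩ hL hLinv α δ) hp
  have hpg : ∀ a b c : Fin m, DifferentiableAt ℝ
      (fun w => pdx (fun y w' => gmet L y w' a b) c x w) v := fun a b c =>
    diffAt_slice_v (f := fun y w => pdx (fun y' w' => gmet L y' w' a b) c y w) hΩ
      (pdxg_smooth hΩ hL a b c) hp
  have hT : ∀ δ, DifferentiableAt ℝ (fun w => Tsum L δ x w) v := by
    intro δ
    refine DifferentiableAt.fun_sum fun β _ => DifferentiableAt.fun_sum fun γ _ => ?_
    exact ((((hpg δ γ β).add (hpg δ β γ)).sub (hpg β γ δ)).mul (diff_proj β v)).mul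
      (diff_proj γ v)
  have : DifferentiableAt ℝ (fun w => ∑ δ, ginv L x w α δ * Tsum L δ x w) v :=
    DifferentiableAt.fun_sum fun δ _ => (hgi δ).mul (hT δ)
  simpa [spray_def'] using this.const_mul (1/4 : ℝ)

include hΩ hL hLhom hcone hLinv in
lemma euler_spray (hp : (x, v) ∈ Ω) (α : Fin m) :
    ∑ μ, v μ * nConn L α μ x v = 2 * spray L α x v := by
  have := eulerAt (f := fun w => spray L α x w)
    (spray_slice_diff hΩ hL hLinv hp α) 2
    (fun s hs => spray_hom hΩ hL hLhom hcone hp hs α)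
  simpa [nConn, pdv] using this

end sprayhom

section keyidentity
variable {Ω : Set (Vec m × Vec m)} {L : Vec m → Vec m → ℝ} {x v : Vec m}
variable (hΩ : IsOpen Ω)
  (hL : ContDiffOn ℝ (⊤ : ℕ∞) (fun p : Vec m × Vec m => L p.1 p.2) Ω)
  (hLhom : ∀ p ∈ Ω, ∀ s : ℝ, 0 < s → L p.1 (s • p.2) = s ^ 2 * L p.1 p.2)
  (hcone : ∀ p ∈ Ω, ∀ s : ℝ, 0 < s → (p.1, s • p.2) ∈ Ω)
  (hLinv : ∀ p ∈ Ω, IsUnit (gmet L p.1 p.2).det)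

include hΩ hL hLhom hcone hLinv in
/-- horizontal invariance of `L` : `∂L/∂x^μ = N^ν_μ ∂L/∂v^ν`. -/
lemma ell_N (hp : (x, v) ∈ Ω) (μ : Fin m) :
    ∑ ν, pdv L ν x v * nConn L ν μ x v = pdx L μ x v := by
  have hmem : ∀ᶠ w in 𝓝 v, (x, w) ∈ Ω := by
    have : IsOpen {w : Vec m | (x, w) ∈ Ω} := hΩ.preimage (by fun_prop)
    exact this.mem_nhds hp
  have hΦΨ : ∀ w, (x, w) ∈ Ω →
      ∑ ν, pdv L ν x w * spray L ν x w = (1/2) * ∑ β, w β * pdx L β x w := by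
    intro w hw
    have key : ∀ β, ∑ δ, w δ * pdx (fun y w' => pdv L δ y w') β x w
        = 2 * pdx L β x w := by
      intro β
      rw [pdx_contract hΩ (fun δ => ell_smooth hΩ hL δ) (fun δ => w δ)
        (fun y w' => 2 * L y w') hw (fun y hy => ?_) β]
      · exact pdx_const_mul hΩ hL 2 hw β
      · show ∑ δ, w δ * pdv L δ y w = 2 * L y w
        exact euler_L hΩ hL hLhom hy
    have h1 : ∑ δ, w δ * (∑ α, gmet L x w δ α * spray L α x w)
        = ∑ ν, pdv L ν x w * spray L ν x w := by
      calc ∑ δ, w δ * (∑ α, gmet L x w δ α * spray L α x w)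
          = ∑ δ, ∑ α, (w δ * gmet L x w δ α) * spray L α x w := by
            refine Finset.sum_congr rfl fun δ _ => ?_
            rw [Finset.mul_sum]
            exact Finset.sum_congr rfl fun α _ => by ring
        _ = ∑ α, ∑ δ, (w δ * gmet L x w δ α) * spray L α x w := Finset.sum_comm
        _ = ∑ α, (∑ δ, w δ * gmet L x w δ α) * spray L α x w := by
            refine Finset.sum_congr rfl fun α _ => ?_
            rw [Finset.sum_mul]
        _ = ∑ ν, pdv L ν x w * spray L ν x w := by
            refine Finset.sum_congr rfl fun α _ => ?_
            rw [euler_g hΩ hL hLhom hw hcone α]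
    have h2 : ∑ δ, w δ * (∑ α, gmet L x w δ α * spray L α x w)
        = (1/2) * ∑ β, w β * pdx L β x w := by
      calc ∑ δ, w δ * (∑ α, gmet L x w δ α * spray L α x w)
          = ∑ δ, w δ * ((1/2) * (∑ β, w β * pdx (fun y w' => pdv L δ y w') β x w)
              - (1/2) * pdx L δ x w) := by
            refine Finset.sum_congr rfl fun δ _ => ?_
            rw [spray_eqn hΩ hL hLhom hcone hLinv hw δ]
        _ = (1/2) * (∑ δ, ∑ β, (w δ * w β) * pdx (fun y w' => pdv L δ y w') β x w)
              - (1/2) * ∑ δ, w δ * pdx L δ x w := by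
            rw [Finset.mul_sum, Finset.mul_sum, ← Finset.sum_sub_distrib]
            refine Finset.sum_congr rfl fun δ _ => ?_
            have hS : w δ * ∑ β, w β * pdx (fun y w' => pdv L δ y w') β x w
                = ∑ β, (w δ * w β) * pdx (fun y w' => pdv L δ y w') β x w := by
              rw [Finset.mul_sum]
              exact Finset.sum_congr rfl fun β _ => by ring
            rw [← hS]
            ring
        _ = (1/2) * (∑ β, w β * (∑ δ, w δ * pdx (fun y w' => pdv L δ y w') β x w))
              - (1/2) * ∑ δ, w δ * pdx L δ x w := by
            congr 1
            rw [Finset.sum_comm]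
            congr 1
            refine Finset.sum_congr rfl fun β _ => ?_
            rw [Finset.mul_sum]
            exact Finset.sum_congr rfl fun δ _ => by ring
        _ = (1/2) * (∑ β, w β * (2 * pdx L β x w)) - (1/2) * ∑ δ, w δ * pdx L δ x w := by
            congr 1
            rw [Finset.mul_sum, Finset.mul_sum]
            refine Finset.sum_congr rfl fun β _ => ?_
            rw [key β]
        _ = (1/2) * ∑ β, w β * pdx L β x w := by
            have h2S : ∑ β, w β * (2 * pdx L β x w) = 2 * ∑ β, w β * pdx L β x w := by
              rw [Finset.mul_sum]
              exact Finset.sum_congr rfl fun β _ => by ring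
            rw [h2S]
            ring
    rw [← h1, h2]
  -- differentiability of the slices
  have hℓd : ∀ ν, DifferentiableAt ℝ (fun w => pdv L ν x w) v := fun ν =>
    diffAt_slice_v (f := fun y w => pdv L ν y w) hΩ (ell_smooth hΩ hL ν) hp
  have hGd : ∀ ν, DifferentiableAt ℝ (fun w => spray L ν x w) v := fun ν =>
    spray_slice_diff hΩ hL hLinv hp ν
  have hpxd : ∀ β, DifferentiableAt ℝ (fun w => pdx L β x w) v := fun β =>
    diffAt_slice_v (f := fun y w => pdx L β y w) hΩ (pdxL_smooth hΩ hL β) hp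
  have hfeq : fderiv ℝ (fun w => ∑ ν, pdv L ν x w * spray L ν x w) v
      = fderiv ℝ (fun w => (1/2) * ∑ β, w β * pdx L β x w) v := by
    apply Filter.EventuallyEq.fderiv_eq
    filter_upwards [hmem] with w hw
    exact hΦΨ w hw
  have EΦ : fderiv ℝ (fun w => ∑ ν, pdv L ν x w * spray L ν x w) v (Pi.single μ 1)
      = ∑ ν, (pdv L ν x v * nConn L ν μ x v + spray L ν x v * gmet L x v μ ν) := by
    rw [fderiv_fun_sum (fun ν _ => (hℓd ν).fun_mul (hGd ν)), ContinuousLinearMap.sum_apply]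
    refine Finset.sum_congr rfl fun ν _ => ?_
    rw [fderiv_fun_mul (hℓd ν) (hGd ν)]
    simp only [ContinuousLinearMap.add_apply, ContinuousLinearMap.smul_apply, smul_eq_mul]
    rfl
  have EΨ : fderiv ℝ (fun w => (1/2) * ∑ β, w β * pdx L β x w) v (Pi.single μ 1)
      = (1/2) * (pdx L μ x v
          + ∑ β, v β * pdx (fun y w => pdv L μ y w) β x v) := by
    have hdsum : DifferentiableAt ℝ (fun w => ∑ β, w β * pdx L β x w) v :=
      DifferentiableAt.fun_sum fun β _ => (diff_proj β v).mul (hpxd β)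
    rw [fderiv_const_mul hdsum]
    simp only [ContinuousLinearMap.smul_apply, smul_eq_mul]
    congr 1
    rw [fderiv_fun_sum (fun β _ => (diff_proj β v).fun_mul (hpxd β)), ContinuousLinearMap.sum_apply]
    have hterm : ∀ β, fderiv ℝ (fun w => w β * pdx L β x w) v (Pi.single μ 1)
        = v β * pdx (fun y w => pdv L μ y w) β x v
          + pdx L β x v * (Pi.single μ 1 : Vec m) β := by
      intro β
      rw [fderiv_fun_mul (diff_proj β v) (hpxd β)]
      simp only [ContinuousLinearMap.add_apply, ContinuousLinearMap.smul_apply, smul_eq_mul]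
      congr 1
      · congr 1
        have : fderiv ℝ (fun w => pdx L β x w) v (Pi.single μ 1)
            = pdv (fun y w => pdx L β y w) μ x v := rfl
        rw [this, pdv_pdx_symm hΩ hL hp μ β]
      · congr 1
        rw [fderiv_proj]
        rfl
    rw [Finset.sum_congr rfl fun β _ => hterm β, Finset.sum_add_distrib]
    have hcollapse : ∑ β, pdx L β x v * (Pi.single μ 1 : Vec m) β = pdx L μ x v := by
      have : ∀ β, pdx L β x v * (Pi.single μ 1 : Vec m) β
          = if β = μ then pdx L β x v else 0 := by
        intro β
        by_cases h : β = μ <;> simp [Pi.single_apply, h]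
      rw [Finset.sum_congr rfl fun β _ => this β, Finset.sum_ite_eq' Finset.univ μ]
      simp
    rw [hcollapse]
    ring
  have hspr : ∑ ν, spray L ν x v * gmet L x v μ ν
      = (1/2) * (∑ β, v β * pdx (fun y w => pdv L μ y w) β x v)
        - (1/2) * pdx L μ x v := by
    rw [← spray_eqn hΩ hL hLhom hcone hLinv hp μ]
    exact Finset.sum_congr rfl fun ν _ => by ring
  have hfin := EΦ.symm.trans ((congrFun (congrArg DFunLike.coe hfeq) (Pi.single μ 1)).trans EΨ)
  rw [Finset.sum_add_distrib, hspr] at hfin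
  linarith

end keyidentity

section comp
variable {Ω : Set (Vec m × Vec m)} {L : Vec m → Vec m → ℝ} {f : Vec m → Vec m → ℝ}
variable {u : Vec m → Vec m} {x : Vec m}

lemma pde_eq (hu : DifferentiableAt ℝ u x) (ν μ : Fin m) :
    pde u ν μ x = fderiv ℝ u x (Pi.single μ 1) ν := by
  have : HasFDerivAt (fun y => u y ν)
      ((ContinuousLinearMap.proj ν : Vec m →L[ℝ] ℝ).comp (fderiv ℝ u x)) x :=
    (ContinuousLinearMap.proj ν : Vec m →L[ℝ] ℝ).hasFDerivAt.comp x hu.hasFDerivAt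
  rw [pde, this.fderiv]
  rfl

lemma hasFDerivAt_comp_u (hΩ : IsOpen Ω)
    (hf : ContDiffOn ℝ (⊤ : ℕ∞) (fun p : Vec m × Vec m => f p.1 p.2) Ω)
    (hu : DifferentiableAt ℝ u x) (hp : (x, u x) ∈ Ω) :
    HasFDerivAt (fun y => f y (u y))
      ((fderiv ℝ (fun p : Vec m × Vec m => f p.1 p.2) (x, u x)).comp
        ((ContinuousLinearMap.id ℝ (Vec m)).prod (fderiv ℝ u x))) x := by
  have hγ : HasFDerivAt (fun y => ((y, u y) : Vec m × Vec m))
      ((ContinuousLinearMap.id ℝ (Vec m)).prod (fderiv ℝ u x)) x :=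
    (hasFDerivAt_id x).prodMk hu.hasFDerivAt
  exact (diffAt_unc hΩ hf hp).hasFDerivAt.comp x hγ

lemma diff_comp_u (hΩ : IsOpen Ω)
    (hf : ContDiffOn ℝ (⊤ : ℕ∞) (fun p : Vec m × Vec m => f p.1 p.2) Ω)
    (hu : DifferentiableAt ℝ u x) (hp : (x, u x) ∈ Ω) :
    DifferentiableAt ℝ (fun y => f y (u y)) x :=
  (hasFDerivAt_comp_u hΩ hf hu hp).differentiableAt

lemma fderiv_comp_u (hΩ : IsOpen Ω)
    (hf : ContDiffOn ℝ (⊤ : ℕ∞) (fun p : Vec m × Vec m => f p.1 p.2) Ω)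
    (hu : DifferentiableAt ℝ u x) (hp : (x, u x) ∈ Ω) (μ : Fin m) :
    fderiv ℝ (fun y => f y (u y)) x (Pi.single μ 1)
      = pdx f μ x (u x) + ∑ ν, pde u ν μ x * pdv f ν x (u x) := by
  rw [(hasFDerivAt_comp_u hΩ hf hu hp).fderiv]
  have : ((fderiv ℝ (fun p : Vec m × Vec m => f p.1 p.2) (x, u x)).comp
        ((ContinuousLinearMap.id ℝ (Vec m)).prod (fderiv ℝ u x))) (Pi.single μ 1)
      = fderiv ℝ (fun p : Vec m × Vec m => f p.1 p.2) (x, u x)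
          (Pi.single μ 1, fderiv ℝ u x (Pi.single μ 1)) := rfl
  rw [this, prod_split2]
  congr 1
  · exact (pdx_repr hΩ hf hp μ).symm
  · refine Finset.sum_congr rfl fun ν _ => ?_
    rw [pde_eq hu ν μ, pdv_repr hΩ hf hp ν]

end comp

section expand
variable {Ω : Set (Vec m × Vec m)} {L : Vec m → Vec m → ℝ} {x v : Vec m}
variable (hΩ : IsOpen Ω)
  (hL : ContDiffOn ℝ (⊤ : ℕ∞) (fun p : Vec m × Vec m => L p.1 p.2) Ω)
  (hLhom : ∀ p ∈ Ω, ∀ s : ℝ, 0 < s → L p.1 (s • p.2) = s ^ 2 * L p.1 p.2)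
  (hcone : ∀ p ∈ Ω, ∀ s : ℝ, 0 < s → (p.1, s • p.2) ∈ Ω)

include hΩ hL hLhom hcone in
lemma gx_contract (hp : (x, v) ∈ Ω) (μ β : Fin m) :
    ∑ α, v α * pdx (fun y w => gmet L y w α β) μ x v
      = pdx (fun y w => pdv L β y w) μ x v := by
  refine pdx_contract hΩ (fun α => gmet_smooth hΩ hL α β) (fun α => v α)
    (fun y w => pdv L β y w) hp (fun y hy => ?_) μ
  show ∑ α, v α * gmet L y v α β = pdv L β y v
  exact euler_g hΩ hL hLhom hy hcone β

include hΩ hL hLhom hcone in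
lemma gxx_contract (hp : (x, v) ∈ Ω) (μ : Fin m) :
    ∑ α, ∑ β, v α * v β * pdx (fun y w => gmet L y w α β) μ x v
      = 2 * pdx L μ x v := by
  have := pdx_contract (h := fun (q : Fin m × Fin m) (y w : Vec m) => gmet L y w q.1 q.2)
    hΩ (fun q : Fin m × Fin m => gmet_smooth hΩ hL q.1 q.2)
    (fun q => v q.1 * v q.2) (fun y w => 2 * L y w) hp (fun y hy => by
      show ∑ q : Fin m × Fin m, (v q.1 * v q.2) * gmet L y v q.1 q.2 = 2 * L y v
      rw [Fintype.sum_prod_type, ← g_vv hΩ hL hLhom hy hcone]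
      exact Finset.sum_congr rfl fun β _ => Finset.sum_congr rfl fun γ _ => by ring) μ
  rw [pdx_const_mul hΩ hL 2 hp μ] at this
  rw [← this, Fintype.sum_prod_type]

omit hLhom hcone

include hΩ hL in
lemma fderiv_gProd_apply {u X Y : Vec m → Vec m}
    (hu : DifferentiableAt ℝ u x) (hp : (x, u x) ∈ Ω)
    (hX : ∀ α, DifferentiableAt ℝ (fun y => X y α) x)
    (hY : ∀ β, DifferentiableAt ℝ (fun y => Y y β) x) (μ : Fin m) :
    fderiv ℝ (gProd L u X Y) x (Pi.single μ 1)
      = ∑ α, ∑ β,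
          ((pdx (fun y w => gmet L y w α β) μ x (u x)
              + ∑ ν, pde u ν μ x * pdv (fun y w => gmet L y w α β) ν x (u x))
                * X x α * Y x β
            + gmet L x (u x) α β * pde X α μ x * Y x β
            + gmet L x (u x) α β * X x α * pde Y β μ x) := by
  have hA : ∀ α β, DifferentiableAt ℝ (fun y => gmet L y (u y) α β) x := fun α β =>
    diff_comp_u (f := fun y w => gmet L y w α β) hΩ (gmet_smooth hΩ hL α β) hu hp
  have hterm : ∀ α β, DifferentiableAt ℝ
      (fun y => gmet L y (u y) α β * X y α * Y y β) x := fun α β =>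
    ((hA α β).mul (hX α)).mul (hY β)
  have hgP : gProd L u X Y = fun y => ∑ α, ∑ β, gmet L y (u y) α β * X y α * Y y β := rfl
  rw [hgP, fderiv_fun_sum (fun α _ => DifferentiableAt.fun_sum fun β _ => hterm α β),
    ContinuousLinearMap.sum_apply]
  refine Finset.sum_congr rfl fun α _ => ?_
  rw [fderiv_fun_sum (fun β _ => hterm α β), ContinuousLinearMap.sum_apply]
  refine Finset.sum_congr rfl fun β _ => ?_
  rw [fderiv_fun_mul ((hA α β).fun_mul (hX α)) (hY β), fderiv_fun_mul (hA α β) (hX α)]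
  simp only [ContinuousLinearMap.add_apply, ContinuousLinearMap.smul_apply, smul_eq_mul]
  have e1 : fderiv ℝ (fun y => gmet L y (u y) α β) x (Pi.single μ 1)
      = pdx (fun y w => gmet L y w α β) μ x (u x)
        + ∑ ν, pde u ν μ x * pdv (fun y w => gmet L y w α β) ν x (u x) :=
    fderiv_comp_u (f := fun y w => gmet L y w α β) hΩ (gmet_smooth hΩ hL α β) hu hp μ
  have e2 : fderiv ℝ (fun y => X y α) x (Pi.single μ 1) = pde X α μ x := rfl
  have e3 : fderiv ℝ (fun y => Y y β) x (Pi.single μ 1) = pde Y β μ x := rfl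
  rw [e1, e2, e3]
  ring

end expand

section sumhelp
lemma sum2_add4 (f g h k : Fin m → Fin m → ℝ) :
    ∑ α, ∑ β, (f α β + g α β + h α β + k α β)
      = (∑ α, ∑ β, f α β) + (∑ α, ∑ β, g α β)
        + (∑ α, ∑ β, h α β) + (∑ α, ∑ β, k α β) := by
  rw [← Finset.sum_add_distrib, ← Finset.sum_add_distrib, ← Finset.sum_add_distrib]
  refine Finset.sum_congr rfl fun α _ => ?_
  rw [← Finset.sum_add_distrib, ← Finset.sum_add_distrib, ← Finset.sum_add_distrib]

lemma sum_mul_add4 (c a b d e : Fin m → ℝ) :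
    ∑ μ, c μ * (a μ + b μ + d μ + e μ)
      = (∑ μ, c μ * a μ) + (∑ μ, c μ * b μ) + (∑ μ, c μ * d μ) + (∑ μ, c μ * e μ) := by
  rw [← Finset.sum_add_distrib, ← Finset.sum_add_distrib, ← Finset.sum_add_distrib]
  exact Finset.sum_congr rfl fun μ _ => by ring

lemma sum2_swap_pull (c d : Fin m → ℝ) (M : Fin m → Fin m → ℝ) :
    ∑ μ, c μ * ∑ β, d β * M β μ = ∑ β, d β * ∑ μ, c μ * M β μ := by
  calc ∑ μ, c μ * ∑ β, d β * M β μ = ∑ μ, ∑ β, c μ * (d β * M β μ) := by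
        exact Finset.sum_congr rfl fun μ _ => Finset.mul_sum _ _ _
    _ = ∑ β, ∑ μ, c μ * (d β * M β μ) := Finset.sum_comm
    _ = ∑ β, d β * ∑ μ, c μ * M β μ := by
        refine Finset.sum_congr rfl fun β _ => ?_
        rw [Finset.mul_sum]
        exact Finset.sum_congr rfl fun μ _ => by ring
end sumhelp

section canned
variable {Ω : Set (Vec m × Vec m)} {L : Vec m → Vec m → ℝ} {x v : Vec m}
variable (hΩ : IsOpen Ω)
  (hL : ContDiffOn ℝ (⊤ : ℕ∞) (fun p : Vec m × Vec m => L p.1 p.2) Ω)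
  (hLhom : ∀ p ∈ Ω, ∀ s : ℝ, 0 < s → L p.1 (s • p.2) = s ^ 2 * L p.1 p.2)
  (hcone : ∀ p ∈ Ω, ∀ s : ℝ, 0 < s → (p.1, s • p.2) ∈ Ω)

include hΩ hL hLhom hcone in
lemma cartan_zero (hp : (x, v) ∈ Ω) (μ : Fin m) (c Z : Fin m → ℝ) :
    ∑ α, ∑ β, (∑ ν, c ν * pdv (fun y w => gmet L y w α β) ν x v) * v α * Z β = 0 := by
  calc ∑ α, ∑ β, (∑ ν, c ν * pdv (fun y w => gmet L y w α β) ν x v) * v α * Z β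
      = ∑ α, ∑ β, ∑ ν, c ν * (v α * pdv (fun y w => gmet L y w α β) ν x v) * Z β := by
        refine Finset.sum_congr rfl fun α _ => Finset.sum_congr rfl fun β _ => ?_
        rw [Finset.sum_mul, Finset.sum_mul]
        exact Finset.sum_congr rfl fun ν _ => by ring
    _ = ∑ α, ∑ ν, ∑ β, c ν * (v α * pdv (fun y w => gmet L y w α β) ν x v) * Z β := by
        exact Finset.sum_congr rfl fun α _ => Finset.sum_comm
    _ = ∑ ν, ∑ α, ∑ β, c ν * (v α * pdv (fun y w => gmet L y w α β) ν x v) * Z β :=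
        Finset.sum_comm
    _ = 0 := by
        refine Finset.sum_eq_zero fun ν _ => ?_
        rw [Finset.sum_comm]
        refine Finset.sum_eq_zero fun β _ => ?_
        have hpull : ∑ α, c ν * (v α * pdv (fun y w => gmet L y w α β) ν x v) * Z β
            = (c ν * Z β) * ∑ α, v α * pdv (fun y w => gmet L y w α β) ν x v := by
          rw [Finset.mul_sum]
          exact Finset.sum_congr rfl fun α _ => by ring
        rw [hpull, cartan_v hΩ hL hLhom hp hcone ν β, mul_zero]

include hΩ hL hLhom hcone in
lemma sumg_CD1 (hp : (x, v) ∈ Ω) (c : Fin m → ℝ) :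
    ∑ α, ∑ β, gmet L x v α β * c α * v β = ∑ α, pdv L α x v * c α := by
  refine Finset.sum_congr rfl fun α _ => ?_
  have : ∑ β, gmet L x v α β * c α * v β = c α * ∑ β, gmet L x v α β * v β := by
    rw [Finset.mul_sum]
    exact Finset.sum_congr rfl fun β _ => by ring
  rw [this, euler_g' hΩ hL hLhom hp hcone α]
  ring

include hΩ hL hLhom hcone in
lemma sumg_CD2 (hp : (x, v) ∈ Ω) (c : Fin m → ℝ) :
    ∑ α, ∑ β, gmet L x v α β * v α * c β = ∑ β, pdv L β x v * c β := by
  rw [Finset.sum_comm]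
  refine Finset.sum_congr rfl fun β _ => ?_
  have : ∑ α, gmet L x v α β * v α * c β = c β * ∑ α, v α * gmet L x v α β := by
    rw [Finset.mul_sum]
    exact Finset.sum_congr rfl fun α _ => by ring
  rw [this, euler_g hΩ hL hLhom hp hcone β]
  ring

include hΩ hL hLhom hcone in
lemma sumgx_contract (hp : (x, v) ∈ Ω) (μ : Fin m) (Z : Fin m → ℝ) :
    ∑ α, ∑ β, pdx (fun y w => gmet L y w α β) μ x v * v α * Z β
      = ∑ β, Z β * pdx (fun y w => pdv L β y w) μ x v := by
  rw [Finset.sum_comm]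
  refine Finset.sum_congr rfl fun β _ => ?_
  have : ∑ α, pdx (fun y w => gmet L y w α β) μ x v * v α * Z β
      = Z β * ∑ α, v α * pdx (fun y w => gmet L y w α β) μ x v := by
    rw [Finset.mul_sum]
    exact Finset.sum_congr rfl fun α _ => by ring
  rw [this, gx_contract hΩ hL hLhom hcone hp μ β]
end canned


/-- Proposition (Prop. 2.2(i), Eq. (doi)): for a pseudo-Finsler Lagrangian with spray
nonlinear connection, `(1/2)∂_X g_u(u,u) = g_u(u, D_X u)
= ∂_u g_u(u,X) − g_u(D̃_u u, X) + g_u(u,[X,u])` on `U`. -/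
theorem statement0 {m : ℕ} (hm : 2 ≤ m)
    (Ω : Set (Vec m × Vec m)) (hΩopen : IsOpen Ω) (hΩne : Ω.Nonempty)
    (hΩslit : ∀ p ∈ Ω, p.2 ≠ 0)
    (hΩcone : ∀ p ∈ Ω, ∀ s : ℝ, 0 < s → (p.1, s • p.2) ∈ Ω)
    (L : Vec m → Vec m → ℝ)
    (hLsmooth : ContDiffOn ℝ (⊤ : ℕ∞) (fun p : Vec m × Vec m => L p.1 p.2) Ω)
    (hLhom : ∀ p ∈ Ω, ∀ s : ℝ, 0 < s → L p.1 (s • p.2) = s ^ 2 * L p.1 p.2)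
    (hLinv : ∀ p ∈ Ω, IsUnit (gmet L p.1 p.2).det)
    (U : Set (Vec m)) (hUopen : IsOpen U)
    (u : Vec m → Vec m) (husmooth : ContDiffOn ℝ (⊤ : ℕ∞) u U)
    (huΩ : ∀ x ∈ U, (x, u x) ∈ Ω)
    (X : Vec m → Vec m) (hXsmooth : ContDiffOn ℝ (⊤ : ℕ∞) X U) :
    ∀ x ∈ U,
      (1/2) * dirD X (gProd L u u u) x = gProd L u u (covD L u X) x
      ∧ gProd L u u (covD L u X) x
          = dirD u (gProd L u u X) x - gProd L u (flipD L u u) X x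
            + gProd L u u (lieB X u) x := by
  intro x hx
  have hL' : ContDiffOn ℝ (⊤ : ℕ∞) (fun p : Vec m × Vec m => L p.1 p.2) Ω :=
    hLsmooth.of_le (by simp)
  have hp : (x, u x) ∈ Ω := huΩ x hx
  have hu : DifferentiableAt ℝ u x :=
    (husmooth.contDiffAt (hUopen.mem_nhds hx)).differentiableAt (by simp)
  have hXd : DifferentiableAt ℝ X x :=
    (hXsmooth.contDiffAt (hUopen.mem_nhds hx)).differentiableAt (by simp)
  have huc : ∀ α, DifferentiableAt ℝ (fun y => u y α) x := fun α =>
    ((ContinuousLinearMap.proj α : Vec m →L[ℝ] ℝ).differentiableAt).comp x hu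
  have hXc : ∀ α, DifferentiableAt ℝ (fun y => X y α) x := fun α =>
    ((ContinuousLinearMap.proj α : Vec m →L[ℝ] ℝ).differentiableAt).comp x hXd
  -- abbreviations for readability of the proof term below (all plain terms)
  -- key scalar quantities
  set P : ℝ := ∑ β, X x β * pdx L β x (u x) with hPdef
  set Q : ℝ := ∑ μ, X x μ * ∑ β, pdv L β x (u x) * pde u β μ x with hQdef
  set T1v : ℝ := ∑ β, X x β * ∑ μ, u x μ * pdx (fun y w => pdv L β y w) μ x (u x) with hT1def
  set T3v : ℝ := ∑ μ, u x μ * ∑ α, ∑ β, gmet L x (u x) α β * pde u α μ x * X x β with hT3def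
  set T4v : ℝ := ∑ μ, u x μ * ∑ β, pdv L β x (u x) * pde X β μ x with hT4def
  -- (1) the covariant-derivative side
  have Hcov : gProd L u u (covD L u X) x = P + Q := by
    have h1 : gProd L u u (covD L u X) x
        = ∑ β, pdv L β x (u x) * (∑ μ, (pde u β μ x + nConn L β μ x (u x)) * X x μ) := by
      have : gProd L u u (covD L u X) x
          = ∑ α, ∑ β, gmet L x (u x) α β * u x α *
              (∑ μ, (pde u β μ x + nConn L β μ x (u x)) * X x μ) := rfl
      rw [this, sumg_CD2 hΩopen hL' hLhom hΩcone hp]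
    rw [h1]
    calc ∑ β, pdv L β x (u x) * (∑ μ, (pde u β μ x + nConn L β μ x (u x)) * X x μ)
        = ∑ β, ∑ μ, (X x μ * (pdv L β x (u x) * pde u β μ x)
            + X x μ * (pdv L β x (u x) * nConn L β μ x (u x))) := by
          refine Finset.sum_congr rfl fun β _ => ?_
          rw [Finset.mul_sum]
          exact Finset.sum_congr rfl fun μ _ => by ring
      _ = ∑ μ, ∑ β, (X x μ * (pdv L β x (u x) * pde u β μ x)
            + X x μ * (pdv L β x (u x) * nConn L β μ x (u x))) := Finset.sum_comm
      _ = ∑ μ, (X x μ * ∑ β, pdv L β x (u x) * pde u β μ x)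
            + ∑ μ, X x μ * (∑ ν, pdv L ν x (u x) * nConn L ν μ x (u x)) := by
          rw [← Finset.sum_add_distrib]
          refine Finset.sum_congr rfl fun μ _ => ?_
          rw [Finset.sum_add_distrib, Finset.mul_sum, Finset.mul_sum]
      _ = P + Q := by
          rw [hPdef, hQdef]
          have : ∀ μ, X x μ * (∑ ν, pdv L ν x (u x) * nConn L ν μ x (u x))
              = X x μ * pdx L μ x (u x) := fun μ => by
            rw [ell_N hΩopen hL' hLhom hΩcone hLinv hp μ]
          rw [Finset.sum_congr rfl fun μ _ => this μ]
          ring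
  -- (2) expansion of the first directional derivative
  have Esimp : ∀ μ, fderiv ℝ (gProd L u u u) x (Pi.single μ 1)
      = 2 * pdx L μ x (u x) + 2 * ∑ β, pdv L β x (u x) * pde u β μ x := by
    intro μ
    rw [fderiv_gProd_apply hΩopen hL' hu hp huc huc μ]
    have hsplit : ∀ α β,
        (pdx (fun y w => gmet L y w α β) μ x (u x)
          + ∑ ν, pde u ν μ x * pdv (fun y w => gmet L y w α β) ν x (u x))
            * u x α * u x β
          + gmet L x (u x) α β * pde u α μ x * u x β
          + gmet L x (u x) α β * u x α * pde u β μ x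
        = pdx (fun y w => gmet L y w α β) μ x (u x) * u x α * u x β
          + (∑ ν, pde u ν μ x * pdv (fun y w => gmet L y w α β) ν x (u x)) * u x α * u x β
          + gmet L x (u x) α β * pde u α μ x * u x β
          + gmet L x (u x) α β * u x α * pde u β μ x := fun α β => by ring
    rw [Finset.sum_congr rfl fun α _ => Finset.sum_congr rfl fun β _ => hsplit α β,
      sum2_add4]
    have hA : ∑ α, ∑ β, pdx (fun y w => gmet L y w α β) μ x (u x) * u x α * u x β
        = 2 * pdx L μ x (u x) := by
      rw [← gxx_contract hΩopen hL' hLhom hΩcone hp μ]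
      exact Finset.sum_congr rfl fun α _ => Finset.sum_congr rfl fun β _ => by ring
    have hB : ∑ α, ∑ β,
        (∑ ν, pde u ν μ x * pdv (fun y w => gmet L y w α β) ν x (u x)) * u x α * u x β
        = 0 := cartan_zero hΩopen hL' hLhom hΩcone hp μ _ _
    have hC : ∑ α, ∑ β, gmet L x (u x) α β * pde u α μ x * u x β
        = ∑ α, pdv L α x (u x) * pde u α μ x :=
      sumg_CD1 hΩopen hL' hLhom hΩcone hp _
    have hD : ∑ α, ∑ β, gmet L x (u x) α β * u x α * pde u β μ x
        = ∑ β, pdv L β x (u x) * pde u β μ x :=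
      sumg_CD2 hΩopen hL' hLhom hΩcone hp _
    rw [hA, hB, hC, hD]
    ring
  have Hdir1 : dirD X (gProd L u u u) x
      = ∑ μ, X x μ * (2 * pdx L μ x (u x) + 2 * ∑ β, pdv L β x (u x) * pde u β μ x) := by
    rw [dirD]
    exact Finset.sum_congr rfl fun μ _ => by rw [Esimp μ]
  have part1 : (1/2) * dirD X (gProd L u u u) x = gProd L u u (covD L u X) x := by
    rw [Hdir1, Hcov, hPdef, hQdef, Finset.mul_sum, ← Finset.sum_add_distrib]
    exact Finset.sum_congr rfl fun μ _ => by ring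
  refine ⟨part1, ?_⟩
  -- (3) expansion of the second directional derivative
  have Hdir2 : dirD u (gProd L u u X) x = T1v + T3v + T4v := by
    have E2 : ∀ μ, fderiv ℝ (gProd L u u X) x (Pi.single μ 1)
        = (∑ α, ∑ β, pdx (fun y w => gmet L y w α β) μ x (u x) * u x α * X x β)
          + (∑ α, ∑ β, (∑ ν, pde u ν μ x * pdv (fun y w => gmet L y w α β) ν x (u x))
              * u x α * X x β)
          + (∑ α, ∑ β, gmet L x (u x) α β * pde u α μ x * X x β)
          + (∑ α, ∑ β, gmet L x (u x) α β * u x α * pde X β μ x) := by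
      intro μ
      rw [fderiv_gProd_apply hΩopen hL' hu hp huc hXc μ]
      rw [← sum2_add4]
      exact Finset.sum_congr rfl fun α _ => Finset.sum_congr rfl fun β _ => by ring
    rw [dirD]
    have hstep : ∑ μ, u x μ * fderiv ℝ (gProd L u u X) x (Pi.single μ 1)
        = ∑ μ, u x μ *
          ((∑ α, ∑ β, pdx (fun y w => gmet L y w α β) μ x (u x) * u x α * X x β)
            + (∑ α, ∑ β, (∑ ν, pde u ν μ x * pdv (fun y w => gmet L y w α β) ν x (u x))
                * u x α * X x β)
            + (∑ α, ∑ β, gmet L x (u x) α β * pde u α μ x * X x β)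
            + (∑ α, ∑ β, gmet L x (u x) α β * u x α * pde X β μ x)) :=
      Finset.sum_congr rfl fun μ _ => by rw [E2 μ]
    rw [hstep, sum_mul_add4]
    have e1 : ∑ μ, u x μ *
        (∑ α, ∑ β, pdx (fun y w => gmet L y w α β) μ x (u x) * u x α * X x β) = T1v := by
      rw [hT1def]
      rw [Finset.sum_congr rfl fun μ _ => by
        rw [sumgx_contract hΩopen hL' hLhom hΩcone hp μ (fun β => X x β)]]
      exact sum2_swap_pull (fun μ => u x μ) (fun β => X x β) _
    have e2 : ∑ μ, u x μ *
        (∑ α, ∑ β, (∑ ν, pde u ν μ x * pdv (fun y w => gmet L y w α β) ν x (u x))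
          * u x α * X x β) = 0 := by
      rw [Finset.sum_congr rfl fun μ _ => by
        rw [cartan_zero hΩopen hL' hLhom hΩcone hp μ (fun ν => pde u ν μ x) (fun β => X x β),
          mul_zero]]
      exact Finset.sum_const_zero
    have e4 : ∑ μ, u x μ * (∑ α, ∑ β, gmet L x (u x) α β * u x α * pde X β μ x) = T4v := by
      rw [hT4def]
      refine Finset.sum_congr rfl fun μ _ => ?_
      rw [sumg_CD2 hΩopen hL' hLhom hΩcone hp (fun β => pde X β μ x)]
    rw [e1, e2, e4, hT3def]
    ring
  -- (4) the flip term
  have Hflip : gProd L u (flipD L u u) X x = T3v + T1v - P := by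
    have h0 : gProd L u (flipD L u u) X x
        = ∑ α, ∑ β, gmet L x (u x) α β *
            ((∑ μ, pde u α μ x * u x μ) + ∑ μ, nConn L α μ x (u x) * u x μ) * X x β := rfl
    have hN : ∀ α, ∑ μ, nConn L α μ x (u x) * u x μ = 2 * spray L α x (u x) := by
      intro α
      rw [← euler_spray hΩopen hL' hLhom hΩcone hLinv hp α]
      exact Finset.sum_congr rfl fun μ _ => mul_comm _ _
    have h1 : gProd L u (flipD L u u) X x
        = (∑ α, ∑ β, gmet L x (u x) α β * (∑ μ, pde u α μ x * u x μ) * X x β)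
          + (∑ α, ∑ β, gmet L x (u x) α β * (2 * spray L α x (u x)) * X x β) := by
      rw [h0]
      conv_rhs => rw [← Finset.sum_add_distrib]
      refine Finset.sum_congr rfl fun α _ => ?_
      conv_rhs => rw [← Finset.sum_add_distrib]
      refine Finset.sum_congr rfl fun β _ => ?_
      rw [hN α]
      ring
    have h2 : ∑ α, ∑ β, gmet L x (u x) α β * (∑ μ, pde u α μ x * u x μ) * X x β
        = T3v := by
      rw [hT3def]
      calc ∑ α, ∑ β, gmet L x (u x) α β * (∑ μ, pde u α μ x * u x μ) * X x β
          = ∑ α, ∑ β, ∑ μ, u x μ * (gmet L x (u x) α β * pde u α μ x * X x β) := by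
            refine Finset.sum_congr rfl fun α _ => Finset.sum_congr rfl fun β _ => ?_
            rw [Finset.mul_sum, Finset.sum_mul]
            exact Finset.sum_congr rfl fun μ _ => by ring
        _ = ∑ α, ∑ μ, ∑ β, u x μ * (gmet L x (u x) α β * pde u α μ x * X x β) := by
            exact Finset.sum_congr rfl fun α _ => Finset.sum_comm
        _ = ∑ μ, ∑ α, ∑ β, u x μ * (gmet L x (u x) α β * pde u α μ x * X x β) :=
            Finset.sum_comm
        _ = ∑ μ, u x μ * ∑ α, ∑ β, gmet L x (u x) α β * pde u α μ x * X x β := by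
            refine Finset.sum_congr rfl fun μ _ => ?_
            rw [Finset.mul_sum]
            refine Finset.sum_congr rfl fun α _ => ?_
            rw [Finset.mul_sum]
    have h3 : ∑ α, ∑ β, gmet L x (u x) α β * (2 * spray L α x (u x)) * X x β
        = T1v - P := by
      have hswap : ∑ α, ∑ β, gmet L x (u x) α β * (2 * spray L α x (u x)) * X x β
          = ∑ β, 2 * X x β * (∑ α, gmet L x (u x) β α * spray L α x (u x)) := by
        rw [Finset.sum_comm]
        refine Finset.sum_congr rfl fun β _ => ?_
        rw [Finset.mul_sum]
        refine Finset.sum_congr rfl fun α _ => ?_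
        rw [gmet_symm hΩopen hL' hp α β]
        ring
      rw [hswap, hT1def, hPdef, ← Finset.sum_sub_distrib]
      refine Finset.sum_congr rfl fun β _ => ?_
      rw [spray_eqn hΩopen hL' hLhom hΩcone hLinv hp β]
      have : ∑ μ, u x μ * pdx (fun y w => pdv L β y w) μ x (u x)
          = ∑ μ', u x μ' * pdx (fun y w => pdv L β y w) μ' x (u x) := rfl
      ring
    rw [h1, h2, h3]
    ring
  -- (5) the Lie-bracket term
  have Hlie : gProd L u u (lieB X u) x
      = Q - T4v := by
    have h0 : gProd L u u (lieB X u) x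
        = ∑ α, ∑ β, gmet L x (u x) α β * u x α *
            (∑ μ, (X x μ * pde u β μ x - u x μ * pde X β μ x)) := rfl
    rw [h0, sumg_CD2 hΩopen hL' hLhom hΩcone hp
      (fun β => ∑ μ, (X x μ * pde u β μ x - u x μ * pde X β μ x))]
    have : ∑ β, pdv L β x (u x) * ∑ μ, (X x μ * pde u β μ x - u x μ * pde X β μ x)
        = ∑ β, ((∑ μ, X x μ * (pdv L β x (u x) * pde u β μ x))
            - ∑ μ, u x μ * (pdv L β x (u x) * pde X β μ x)) := by
      refine Finset.sum_congr rfl fun β _ => ?_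
      rw [Finset.mul_sum, ← Finset.sum_sub_distrib]
      refine Finset.sum_congr rfl fun μ _ => by ring
    rw [this, Finset.sum_sub_distrib]
    congr 1
    · rw [hQdef, Finset.sum_comm]
      refine Finset.sum_congr rfl fun μ _ => ?_
      rw [Finset.mul_sum]
    · rw [hT4def, Finset.sum_comm]
      refine Finset.sum_congr rfl fun μ _ => ?_
      rw [Finset.mul_sum]
  rw [Hcov, Hdir2, Hflip, Hlie]
  ring
end
end

section
/- Let L be a pseudo-Finsler Lagrangian on Ω with spray nonlinear connection N. Let U ⊆ ℝ^m be open, let u, X : U → ℝ^m be smooth with (x,u(x)) ∈ Ω for all x ∈ U, and suppose u is pregeodesic: D_u u = f·u for some smooth function f : U → ℝ. Then at every point of U, (∂_X f)·u + f·(D_X u) − D̃_u(D_X u) − D_{[X,u]} u = R_u(X), where the first two terms constitute the Leibniz expansion of D_X(D̃_u u) = D_X(f·u) (note D̃_u u = D_u u = f·u). -/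
open scoped BigOperators

noncomputable section

variable {m : ℕ}

/-- The curvature endomorphism `R_u(X)^α = R^α{}_{βμ}(x,u(x)) X^β u^μ`. -/
def curvEndoField (L : Vec m → Vec m → ℝ) (u X : Vec m → Vec m) (x : Vec m) : Vec m :=
  fun α => ∑ β, ∑ μ, curv (nConn L) α β μ x (u x) * X x β * u x μ

namespace PF

/-- smooth on Ω as a function of two variables -/
def SM (Ω : Set (Vec m × Vec m)) (f : Vec m → Vec m → ℝ) : Prop :=
  ContDiffOn ℝ (⊤ : ℕ∞) (fun p : Vec m × Vec m => f p.1 p.2) Ω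

variable {Ω : Set (Vec m × Vec m)} {f : Vec m → Vec m → ℝ} {x v : Vec m}

lemma SM.cda (hΩ : IsOpen Ω) (hf : SM Ω f) (h : (x, v) ∈ Ω) :
    ContDiffAt ℝ (⊤ : ℕ∞) (fun p : Vec m × Vec m => f p.1 p.2) (x, v) :=
  ContDiffOn.contDiffAt hf (hΩ.mem_nhds h)

lemma SM.diffAt (hΩ : IsOpen Ω) (hf : SM Ω f) (h : (x, v) ∈ Ω) :
    DifferentiableAt ℝ (fun p : Vec m × Vec m => f p.1 p.2) (x, v) :=
  (hf.cda hΩ h).differentiableAt (by simp)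

/-- slice in v is ContDiffAt -/
lemma SM.slice_v (hΩ : IsOpen Ω) (hf : SM Ω f) (h : (x, v) ∈ Ω) :
    ContDiffAt ℝ (⊤ : ℕ∞) (f x) v := by
  have h2 : ContDiffAt ℝ (⊤ : ℕ∞) (fun w : Vec m => ((x, w) : Vec m × Vec m)) v :=
    (contDiff_prodMk_right x).contDiffAt
  exact (hf.cda hΩ h).comp v h2

lemma SM.slice_x (hΩ : IsOpen Ω) (hf : SM Ω f) (h : (x, v) ∈ Ω) :
    ContDiffAt ℝ (⊤ : ℕ∞) (fun y => f y v) x := by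
  have h2 : ContDiffAt ℝ (⊤ : ℕ∞) (fun y : Vec m => ((y, v) : Vec m × Vec m)) x :=
    (contDiff_prodMk_left v).contDiffAt
  exact (hf.cda hΩ h).comp x h2

lemma pdv_eq (hΩ : IsOpen Ω) (hf : SM Ω f) (h : (x, v) ∈ Ω) (i : Fin m) :
    pdv f i x v = fderiv ℝ (fun p : Vec m × Vec m => f p.1 p.2) (x, v) (0, Pi.single i 1) := by
  have hdf := hf.diffAt hΩ h
  have hc : HasFDerivAt (fun w : Vec m => ((x, w) : Vec m × Vec m))
      (ContinuousLinearMap.inr ℝ (Vec m) (Vec m)) v := hasFDerivAt_prodMk_right x v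
  have h3 := (hdf.hasFDerivAt.comp v hc).fderiv
  unfold pdv
  rw [show (f x) = ((fun p : Vec m × Vec m => f p.1 p.2) ∘ Prod.mk x) from rfl, h3]
  rfl

lemma pdx_eq (hΩ : IsOpen Ω) (hf : SM Ω f) (h : (x, v) ∈ Ω) (i : Fin m) :
    pdx f i x v = fderiv ℝ (fun p : Vec m × Vec m => f p.1 p.2) (x, v) (Pi.single i 1, 0) := by
  have hdf := hf.diffAt hΩ h
  have hc : HasFDerivAt (fun y : Vec m => ((y, v) : Vec m × Vec m))
      (ContinuousLinearMap.inl ℝ (Vec m) (Vec m)) x := hasFDerivAt_prodMk_left x v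
  have h3 := (hdf.hasFDerivAt.comp x hc).fderiv
  unfold pdx
  rw [show (fun y => f y v) = ((fun p : Vec m × Vec m => f p.1 p.2) ∘ (fun y => (y, v))) from rfl,
    h3]
  rfl

lemma SM.pdv (hΩ : IsOpen Ω) (hf : SM Ω f) (i : Fin m) : SM Ω (pdv f i) := by
  have h1 : ContDiffOn ℝ (⊤ : ℕ∞)
      (fderiv ℝ (fun p : Vec m × Vec m => f p.1 p.2)) Ω :=
    hf.fderiv_of_isOpen hΩ (by exact_mod_cast le_top)
  have h2 : ContDiffOn ℝ (⊤ : ℕ∞)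
      (fun p : Vec m × Vec m =>
        fderiv ℝ (fun q : Vec m × Vec m => f q.1 q.2) p ((0, Pi.single i 1) : Vec m × Vec m)) Ω :=
    h1.clm_apply contDiffOn_const
  exact h2.congr (fun p hp => by
    rw [show p = (p.1, p.2) from rfl] at hp ⊢
    exact pdv_eq hΩ hf hp i)

lemma SM.pdx (hΩ : IsOpen Ω) (hf : SM Ω f) (i : Fin m) : SM Ω (pdx f i) := by
  have h1 : ContDiffOn ℝ (⊤ : ℕ∞)
      (fderiv ℝ (fun p : Vec m × Vec m => f p.1 p.2)) Ω :=
    hf.fderiv_of_isOpen hΩ (by exact_mod_cast le_top)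
  have h2 : ContDiffOn ℝ (⊤ : ℕ∞)
      (fun p : Vec m × Vec m =>
        fderiv ℝ (fun q : Vec m × Vec m => f q.1 q.2) p ((Pi.single i 1, 0) : Vec m × Vec m)) Ω :=
    h1.clm_apply contDiffOn_const
  exact h2.congr (fun p hp => by
    rw [show p = (p.1, p.2) from rfl] at hp ⊢
    exact pdx_eq hΩ hf hp i)

end PF

namespace PF
variable {Ω : Set (Vec m × Vec m)} {f : Vec m → Vec m → ℝ} {x v : Vec m}

/-- decompose a full derivative into partials -/
lemma fderiv2_split (hΩ : IsOpen Ω) (hf : SM Ω f) (h : (x, v) ∈ Ω) (ξ η : Vec m) :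
    fderiv ℝ (fun p : Vec m × Vec m => f p.1 p.2) (x, v) (ξ, η)
      = (∑ μ, ξ μ * pdx f μ x v) + ∑ β, η β * pdv f β x v := by
  have hdf := hf.diffAt hΩ h
  set F' := fderiv ℝ (fun p : Vec m × Vec m => f p.1 p.2) (x, v) with hF'
  have h1 : ((ξ, η) : Vec m × Vec m) = (ξ, 0) + (0, η) := by simp
  rw [h1, map_add]
  have hξ : (ξ : Vec m) = ∑ μ, ξ μ • (Pi.single μ 1 : Vec m) := by
    funext j; simp [Pi.single_apply]
  have hη : (η : Vec m) = ∑ β, η β • (Pi.single β 1 : Vec m) := by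
    funext j; simp [Pi.single_apply]
  have e1 : F' ((ξ, 0) : Vec m × Vec m) = ∑ μ, ξ μ * pdx f μ x v := by
    calc F' ((ξ, 0) : Vec m × Vec m)
        = F' (∑ μ, ξ μ • ((Pi.single μ 1, 0) : Vec m × Vec m)) := by
          congr 1
          rw [Prod.ext_iff]
          refine ⟨by rw [Prod.fst_sum]; simpa using hξ, by rw [Prod.snd_sum]; simp⟩
      _ = ∑ μ, ξ μ * pdx f μ x v := by
          rw [map_sum]
          refine Finset.sum_congr rfl fun μ _ => ?_
          rw [map_smul, pdx_eq hΩ hf h μ]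
          simp
          exact Or.inl rfl
  have e2 : F' ((0, η) : Vec m × Vec m) = ∑ β, η β * pdv f β x v := by
    calc F' ((0, η) : Vec m × Vec m)
        = F' (∑ β, η β • ((0, Pi.single β 1) : Vec m × Vec m)) := by
          congr 1
          rw [Prod.ext_iff]
          refine ⟨by rw [Prod.fst_sum]; simp, by rw [Prod.snd_sum]; simpa using hη⟩
      _ = ∑ β, η β * pdv f β x v := by
          rw [map_sum]
          refine Finset.sum_congr rfl fun β _ => ?_
          rw [map_smul, pdv_eq hΩ hf h β]
          simp
          exact Or.inl rfl
  rw [e1, e2]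

/-- chain rule along the curve y ↦ (y, u y) -/
lemma fderiv_comp_curve (hΩ : IsOpen Ω) (hf : SM Ω f) {u : Vec m → Vec m}
    (hu : DifferentiableAt ℝ u x) (h : (x, u x) ∈ Ω) (ν : Fin m) :
    fderiv ℝ (fun y => f y (u y)) x (Pi.single ν 1)
      = pdx f ν x (u x) + ∑ β, (fderiv ℝ u x (Pi.single ν 1)) β * pdv f β x (u x) := by
  have hγ : HasFDerivAt (fun y : Vec m => ((y, u y) : Vec m × Vec m))
      ((ContinuousLinearMap.id ℝ (Vec m)).prod (fderiv ℝ u x)) x :=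
    HasFDerivAt.prodMk (hasFDerivAt_id x) hu.hasFDerivAt
  have hdf := hf.diffAt hΩ h
  have hcomp := (hdf.hasFDerivAt.comp x hγ).fderiv
  have : fderiv ℝ (fun y => f y (u y)) x =
      (fderiv ℝ (fun p : Vec m × Vec m => f p.1 p.2) (x, u x)).comp
        ((ContinuousLinearMap.id ℝ (Vec m)).prod (fderiv ℝ u x)) := by
    rw [← hcomp]; rfl
  rw [this]
  have := fderiv2_split hΩ hf h (Pi.single ν 1) (fderiv ℝ u x (Pi.single ν 1))
  simp only [ContinuousLinearMap.comp_apply, ContinuousLinearMap.prod_apply,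
    ContinuousLinearMap.id_apply]
  rw [this]
  have : ∑ μ, (Pi.single ν 1 : Vec m) μ * pdx f μ x (u x) = pdx f ν x (u x) := by
    rw [Finset.sum_eq_single ν]
    · simp
    · intro b _ hb; simp [Pi.single_apply, hb]
    · simp
  rw [this]

/-- also need: differentiability of y ↦ f y (u y) -/
lemma diff_comp_curve (hΩ : IsOpen Ω) (hf : SM Ω f) {u : Vec m → Vec m}
    (hu : DifferentiableAt ℝ u x) (h : (x, u x) ∈ Ω) :
    DifferentiableAt ℝ (fun y => f y (u y)) x := by
  have hγ : DifferentiableAt ℝ (fun y : Vec m => ((y, u y) : Vec m × Vec m)) x :=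
    differentiableAt_fun_id.prodMk hu
  exact (hf.diffAt hΩ h).comp x hγ

/-- Clairaut for a scalar function -/
lemma clairaut {g : Vec m → ℝ} {x : Vec m} (hg : ContDiffAt ℝ (⊤ : ℕ∞) g x) (ξ η : Vec m) :
    fderiv ℝ (fun y => fderiv ℝ g y ξ) x η = fderiv ℝ (fun y => fderiv ℝ g y η) x ξ := by
  have hd : DifferentiableAt ℝ (fderiv ℝ g) x :=
    (hg.fderiv_right (m := (⊤ : ℕ∞)) (by exact_mod_cast le_top)).differentiableAt
      (by simp)
  have key : ∀ ζ : Vec m, fderiv ℝ (fun y => fderiv ℝ g y ζ) x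
      = (fderiv ℝ (fderiv ℝ g) x).flip ζ := by
    intro ζ
    have := fderiv_clm_apply (c := fderiv ℝ g) (u := fun _ => ζ) hd (differentiableAt_const ζ)
    simpa using this
  rw [key ξ, key η]
  have h2 : (2 : WithTop ℕ∞) ≤ ((⊤:ℕ∞) : WithTop ℕ∞) := by
    have : ((2:ℕ∞) : WithTop ℕ∞) ≤ ((⊤:ℕ∞) : WithTop ℕ∞) := by exact_mod_cast le_top
    simpa using this
  have hsym : IsSymmSndFDerivAt ℝ g x := hg.isSymmSndFDerivAt (by rw [minSmoothness_of_isRCLikeNormedField]; exact h2)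
  simpa using hsym η ξ

/-- symmetry of second v-derivatives for a two-variable function -/
lemma pdv_comm (hΩ : IsOpen Ω) (hf : SM Ω f) (h : (x, v) ∈ Ω) (i j : Fin m) :
    pdv (pdv f i) j x v = pdv (pdv f j) i x v := by
  have hg : ContDiffAt ℝ (⊤ : ℕ∞) (f x) v := hf.slice_v hΩ h
  have e : ∀ k l : Fin m, pdv (pdv f k) l x v
      = fderiv ℝ (fun w => fderiv ℝ (f x) w (Pi.single k 1)) v (Pi.single l 1) := by
    intro k l; rfl
  rw [e i j, e j i, clairaut hg]

end PF

namespace PF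
variable {Ω : Set (Vec m × Vec m)} {f : Vec m → Vec m → ℝ} {x v : Vec m}

lemma pdv_hom (hΩ : IsOpen Ω) (hcone : ∀ p ∈ Ω, ∀ s : ℝ, 0 < s → (p.1, s • p.2) ∈ Ω)
    (hf : SM Ω f) {k : ℕ} (hk : 1 ≤ k)
    (hhom : ∀ p ∈ Ω, ∀ s : ℝ, 0 < s → f p.1 (s • p.2) = s ^ k * f p.1 p.2)
    (i : Fin m) : ∀ p ∈ Ω, ∀ s : ℝ, 0 < s →
      pdv f i p.1 (s • p.2) = s ^ (k - 1) * pdv f i p.1 p.2 := by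
  rintro ⟨x, v⟩ h s hs
  have hsv : ((x, s • v) : Vec m × Vec m) ∈ Ω := hcone (x, v) h s hs
  have hO : IsOpen {w : Vec m | (x, w) ∈ Ω} :=
    hΩ.preimage (Continuous.prodMk_right x)
  have hvO : v ∈ {w : Vec m | (x, w) ∈ Ω} := h
  have hdsv : DifferentiableAt ℝ (f x) (s • v) :=
    (hf.slice_v hΩ hsv).differentiableAt (by simp)
  have hdv : DifferentiableAt ℝ (f x) v :=
    (hf.slice_v hΩ h).differentiableAt (by simp)
  set A := fderiv ℝ (f x) (s • v) with hA
  have hlin : HasFDerivAt (fun w : Vec m => s • w)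
      (s • ContinuousLinearMap.id ℝ (Vec m)) v := by
    simpa using ((s • ContinuousLinearMap.id ℝ (Vec m)).hasFDerivAt (x := v))
  have hcomp : HasFDerivAt (fun w : Vec m => f x (s • w))
      (A.comp (s • ContinuousLinearMap.id ℝ (Vec m))) v :=
    HasFDerivAt.comp v hdsv.hasFDerivAt hlin
  have heq : (fun w : Vec m => s ^ k * f x w) =ᶠ[nhds v] (fun w => f x (s • w)) := by
    filter_upwards [hO.mem_nhds hvO] with w hw
    exact (hhom (x, w) hw s hs).symm
  have hcomp' : HasFDerivAt (fun w : Vec m => s ^ k * f x w)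
      (A.comp (s • ContinuousLinearMap.id ℝ (Vec m))) v :=
    hcomp.congr_of_eventuallyEq heq
  have hB : HasFDerivAt (fun w : Vec m => s ^ k * f x w)
      ((s ^ k) • fderiv ℝ (f x) v) v := hdv.hasFDerivAt.const_mul (s ^ k)
  have huniq := hcomp'.unique hB
  have happ := congrArg (fun (T : Vec m →L[ℝ] ℝ) => T (Pi.single i 1)) huniq
  simp only [ContinuousLinearMap.comp_apply, ContinuousLinearMap.smul_apply,
    ContinuousLinearMap.id_apply, smul_eq_mul] at happ
  have hA1 : A (s • (Pi.single i 1 : Vec m)) = s * A (Pi.single i 1) := by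
    rw [map_smul]; simp
  rw [hA1] at happ
  -- happ : s * A (single i 1) = s ^ k * fderiv (f x) v (single i 1)
  have hk' : s ^ k = s * s ^ (k - 1) := by
    conv_lhs => rw [show k = (k - 1) + 1 by omega]
    rw [pow_succ]; ring
  rw [hk'] at happ
  have := mul_left_cancel₀ (ne_of_gt hs) (by linarith [happ] : s * A (Pi.single i 1) = s * (s ^ (k-1) * fderiv ℝ (f x) v (Pi.single i 1)))
  exact this

lemma pdx_hom (hΩ : IsOpen Ω)
    (hf : SM Ω f) {k : ℕ}
    (hhom : ∀ p ∈ Ω, ∀ s : ℝ, 0 < s → f p.1 (s • p.2) = s ^ k * f p.1 p.2)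
    (i : Fin m) : ∀ p ∈ Ω, ∀ s : ℝ, 0 < s →
      pdx f i p.1 (s • p.2) = s ^ k * pdx f i p.1 p.2 := by
  rintro ⟨x, v⟩ h s hs
  have hO : IsOpen {y : Vec m | (y, v) ∈ Ω} :=
    hΩ.preimage (continuous_id.prodMk continuous_const)
  have hxO : x ∈ {y : Vec m | (y, v) ∈ Ω} := h
  have heq : (fun y : Vec m => f y (s • v)) =ᶠ[nhds x] (fun y => s ^ k * f y v) := by
    filter_upwards [hO.mem_nhds hxO] with y hy
    exact hhom (y, v) hy s hs
  have hdv : DifferentiableAt ℝ (fun y => f y v) x :=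
    (hf.slice_x hΩ h).differentiableAt (by simp)
  unfold pdx
  rw [heq.fderiv_eq, fderiv_const_mul hdv]
  simp

lemma euler (hΩ : IsOpen Ω) (hf : SM Ω f)
    (hhom : ∀ p ∈ Ω, ∀ s : ℝ, 0 < s → f p.1 (s • p.2) = s * f p.1 p.2)
    (h : (x, v) ∈ Ω) :
    ∑ β, v β * pdv f β x v = f x v := by
  have hdv : DifferentiableAt ℝ (f x) v :=
    (hf.slice_v hΩ h).differentiableAt (by simp)
  set A := fderiv ℝ (f x) v with hA
  have hline : HasDerivAt (fun s : ℝ => s • v) v 1 := by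
    simpa using (hasDerivAt_id (1:ℝ)).smul_const v
  have hdv' : HasFDerivAt (f x) A ((fun s : ℝ => s • v) 1) := by
    simp only [one_smul]; exact hdv.hasFDerivAt
  have hφ : HasDerivAt (fun s : ℝ => f x (s • v)) (A v) 1 :=
    hdv'.comp_hasDerivAt 1 hline
  have heq : (fun s : ℝ => s * f x v) =ᶠ[nhds 1] (fun s : ℝ => f x (s • v)) := by
    filter_upwards [isOpen_Ioi.mem_nhds (Set.mem_Ioi.mpr zero_lt_one)] with s hs
    exact (hhom (x, v) h s hs).symm
  have hφ' : HasDerivAt (fun s : ℝ => s * f x v) (A v) 1 :=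
    hφ.congr_of_eventuallyEq heq
  have hψ : HasDerivAt (fun s : ℝ => s * f x v) (f x v) 1 := by
    simpa using (hasDerivAt_id (1:ℝ)).mul_const (f x v)
  have hAv : A v = f x v := hφ'.unique hψ
  have hv : (v : Vec m) = ∑ β, v β • (Pi.single β 1 : Vec m) := by
    funext j; simp [Pi.single_apply]
  calc ∑ β, v β * pdv f β x v = A (∑ β, v β • (Pi.single β 1 : Vec m)) := by
        rw [map_sum]
        refine Finset.sum_congr rfl fun β _ => ?_
        rw [map_smul]; rfl
    _ = f x v := by rw [← hv, hAv]

lemma sm_det {M : Vec m × Vec m → Matrix (Fin m) (Fin m) ℝ}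
    (h : ∀ i j, ContDiffOn ℝ (⊤ : ℕ∞) (fun p => M p i j) Ω) :
    ContDiffOn ℝ (⊤ : ℕ∞) (fun p => (M p).det) Ω := by
  have e : (fun p => (M p).det)
      = fun p => ∑ σ : Equiv.Perm (Fin m),
          ((Equiv.Perm.sign σ : ℤ) : ℝ) * ∏ i, M p (σ i) i := by
    funext p
    rw [Matrix.det_apply]
    refine Finset.sum_congr rfl fun σ _ => ?_
    rw [Units.smul_def, zsmul_eq_mul]
  rw [e]
  refine ContDiffOn.sum fun σ _ => contDiffOn_const.mul ?_
  exact contDiffOn_prod fun i _ => h (σ i) i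

lemma sm_inv_entry {M : Vec m × Vec m → Matrix (Fin m) (Fin m) ℝ}
    (h : ∀ i j, ContDiffOn ℝ (⊤ : ℕ∞) (fun p => M p i j) Ω)
    (hdet : ∀ p ∈ Ω, IsUnit (M p).det) (i j : Fin m) :
    ContDiffOn ℝ (⊤ : ℕ∞) (fun p => (M p)⁻¹ i j) Ω := by
  have hadj : ContDiffOn ℝ (⊤ : ℕ∞) (fun p => (M p).adjugate i j) Ω := by
    have e : (fun p => (M p).adjugate i j)
        = fun p => ((M p).updateRow j (Pi.single i 1)).det := by
      funext p; rw [Matrix.adjugate_apply]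
    rw [e]
    refine sm_det fun a b => ?_
    by_cases hab : a = j
    · subst hab
      have e2 : (fun p => (M p).updateRow a (Pi.single i 1) a b)
          = fun _ => (Pi.single i 1 : Vec m) b := by
        funext p; rw [Matrix.updateRow_apply, if_pos rfl]
      rw [e2]; exact contDiffOn_const
    · have e2 : (fun p => (M p).updateRow j (Pi.single i 1) a b)
          = fun p => M p a b := by
        funext p; rw [Matrix.updateRow_apply, if_neg hab]
      rw [e2]; exact h a b
  have hd := sm_det h
  have hinv := hd.inv (fun p hp => (hdet p hp).ne_zero)
  refine (hinv.mul hadj).congr fun p hp => ?_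
  rw [Matrix.inv_def, Matrix.smul_apply, Ring.inverse_eq_inv, smul_eq_mul]
  rfl

end PF

namespace PF

lemma main_algebra {n : ℕ} (P N : Fin n → Fin n → ℝ)
    (A B2 D2 : Fin n → Fin n → Fin n → ℝ)
    (du dX : Fin n → Fin n → ℝ) (uv Xv df : Fin n → ℝ) (fv : ℝ) (α : Fin n)
    (H1 : ∀ ν, ∑ μ, ((D2 α μ ν + B2 ν α μ + ∑ β, du β ν * A β α μ) * uv μ + P α μ * du μ ν)
        = df ν * uv α + fv * du α ν)
    (H3 : ∀ a, ∑ μ, P a μ * uv μ = fv * uv a)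
    (H4 : ∀ b c, D2 α b c = D2 α c b)
    (H5 : ∀ r b, A r α b = A b α r)
    (H6 : ∀ b, ∑ ρ, uv ρ * A ρ α b = N α b)
    (HP : ∀ a b, P a b = du a b + N a b) :
    ((∑ ν, Xv ν * df ν) * uv α + fv * ∑ μ, P α μ * Xv μ)
      - ((∑ ν, (∑ μ, ((D2 α μ ν + B2 ν α μ + ∑ β, du β ν * A β α μ) * Xv μ + P α μ * dX μ ν))
            * uv ν)
          + ∑ μ, N α μ * (∑ ρ, P μ ρ * Xv ρ))
      - ∑ μ, P α μ * (∑ ν, (Xv ν * du μ ν - uv ν * dX μ ν))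
    = ∑ β, ∑ μ, ((B2 β α μ - ∑ ρ, N ρ β * A ρ α μ)
        - (B2 μ α β - ∑ ρ, N ρ μ * A ρ α β)) * Xv β * uv μ := by
  have HPd : ∀ a b, du a b = P a b - N a b := fun a b => by rw [HP]; ring
  -- E1 : from the differentiated pregeodesic equation
  have K : ∑ ν, Xv ν * (∑ μ, ((D2 α μ ν + B2 ν α μ + ∑ β, du β ν * A β α μ) * uv μ
        + P α μ * du μ ν))
      = ∑ ν, Xv ν * (df ν * uv α + fv * du α ν) :=
    Finset.sum_congr rfl fun ν _ => by rw [H1 ν]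
  have KL : ∑ ν, Xv ν * (∑ μ, ((D2 α μ ν + B2 ν α μ + ∑ β, du β ν * A β α μ) * uv μ
        + P α μ * du μ ν))
      = (∑ ν, ∑ μ, D2 α μ ν * uv μ * Xv ν)
        + ((∑ ν, ∑ μ, B2 ν α μ * uv μ * Xv ν)
          + ((∑ ν, ∑ μ, (∑ β, du β ν * A β α μ) * uv μ * Xv ν)
            + (∑ ν, ∑ μ, P α μ * du μ ν * Xv ν))) := by
    rw [← Finset.sum_add_distrib, ← Finset.sum_add_distrib, ← Finset.sum_add_distrib]
    refine Finset.sum_congr rfl fun ν _ => ?_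
    rw [← Finset.sum_add_distrib, ← Finset.sum_add_distrib, ← Finset.sum_add_distrib,
      Finset.mul_sum]
    exact Finset.sum_congr rfl fun μ _ => by ring
  have KR : ∑ ν, Xv ν * (df ν * uv α + fv * du α ν)
      = (∑ ν, Xv ν * df ν) * uv α + fv * (∑ ν, du α ν * Xv ν) := by
    rw [Finset.sum_mul, Finset.mul_sum, ← Finset.sum_add_distrib]
    exact Finset.sum_congr rfl fun ν _ => by ring
  rw [KL, KR] at K
  -- E2
  have E2 : fv * ∑ μ, P α μ * Xv μ
      = fv * (∑ ν, du α ν * Xv ν) + fv * (∑ ν, N α ν * Xv ν) := by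
    rw [← mul_add, ← Finset.sum_add_distrib]
    congr 1
    exact Finset.sum_congr rfl fun ν _ => by rw [HP]; ring
  -- E3
  have E3 : (∑ ν, (∑ μ, ((D2 α μ ν + B2 ν α μ + ∑ β, du β ν * A β α μ) * Xv μ
          + P α μ * dX μ ν)) * uv ν)
      = (∑ ν, ∑ μ, D2 α μ ν * Xv μ * uv ν)
        + ((∑ ν, ∑ μ, B2 ν α μ * Xv μ * uv ν)
          + ((∑ ν, ∑ μ, (∑ β, du β ν * A β α μ) * Xv μ * uv ν)
            + (∑ ν, ∑ μ, P α μ * dX μ ν * uv ν))) := by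
    rw [← Finset.sum_add_distrib, ← Finset.sum_add_distrib, ← Finset.sum_add_distrib]
    refine Finset.sum_congr rfl fun ν _ => ?_
    rw [← Finset.sum_add_distrib, ← Finset.sum_add_distrib, ← Finset.sum_add_distrib,
      Finset.sum_mul]
    exact Finset.sum_congr rfl fun μ _ => by ring
  -- E5
  have E5 : ∑ μ, P α μ * (∑ ν, (Xv ν * du μ ν - uv ν * dX μ ν))
      = (∑ ν, ∑ μ, P α μ * du μ ν * Xv ν) - (∑ ν, ∑ μ, P α μ * dX μ ν * uv ν) := by
    have h1 : ∑ μ, P α μ * (∑ ν, (Xv ν * du μ ν - uv ν * dX μ ν))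
        = ∑ μ, ∑ ν, (P α μ * du μ ν * Xv ν - P α μ * dX μ ν * uv ν) := by
      refine Finset.sum_congr rfl fun μ _ => ?_
      rw [Finset.mul_sum]
      exact Finset.sum_congr rfl fun ν _ => by ring
    rw [h1]
    rw [show (∑ μ, ∑ ν, (P α μ * du μ ν * Xv ν - P α μ * dX μ ν * uv ν))
        = (∑ μ, ∑ ν, P α μ * du μ ν * Xv ν) - ∑ μ, ∑ ν, P α μ * dX μ ν * uv ν by
      simp only [Finset.sum_sub_distrib]]
    rw [show (∑ μ, ∑ ν, P α μ * du μ ν * Xv ν) = ∑ ν, ∑ μ, P α μ * du μ ν * Xv ν from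
      Finset.sum_comm]
    rw [show (∑ μ, ∑ ν, P α μ * dX μ ν * uv ν) = ∑ ν, ∑ μ, P α μ * dX μ ν * uv ν from
      Finset.sum_comm]
  -- E6 : RHS expansion
  have E6 : ∑ β, ∑ μ, ((B2 β α μ - ∑ ρ, N ρ β * A ρ α μ)
        - (B2 μ α β - ∑ ρ, N ρ μ * A ρ α β)) * Xv β * uv μ
      = ((∑ β, ∑ μ, B2 β α μ * Xv β * uv μ)
          - (∑ β, ∑ μ, (∑ ρ, N ρ β * A ρ α μ) * Xv β * uv μ)
          - (∑ β, ∑ μ, B2 μ α β * Xv β * uv μ))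
          + (∑ β, ∑ μ, (∑ ρ, N ρ μ * A ρ α β) * Xv β * uv μ) := by
    have h : (∑ β, ∑ μ, ((B2 β α μ - ∑ ρ, N ρ β * A ρ α μ)
          - (B2 μ α β - ∑ ρ, N ρ μ * A ρ α β)) * Xv β * uv μ)
        = ∑ β, ∑ μ, (B2 β α μ * Xv β * uv μ
            - (∑ ρ, N ρ β * A ρ α μ) * Xv β * uv μ
            - B2 μ α β * Xv β * uv μ
            + (∑ ρ, N ρ μ * A ρ α β) * Xv β * uv μ) :=
      Finset.sum_congr rfl fun β _ => Finset.sum_congr rfl fun μ _ => by ring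
    rw [h]
    simp only [Finset.sum_add_distrib, Finset.sum_sub_distrib]
  -- F1 : symmetry of second derivatives of u
  have F1 : (∑ ν, ∑ μ, D2 α μ ν * Xv μ * uv ν) = ∑ ν, ∑ μ, D2 α μ ν * uv μ * Xv ν := by
    rw [Finset.sum_comm]
    exact Finset.sum_congr rfl fun a _ => Finset.sum_congr rfl fun b _ => by rw [H4]; ring
  -- F2
  have F2 : (∑ ν, ∑ μ, (∑ β, du β ν * A β α μ) * uv μ * Xv ν)
      = ∑ ν, ∑ μ, N α μ * du μ ν * Xv ν := by
    refine Finset.sum_congr rfl fun ν _ => ?_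
    calc ∑ μ, (∑ β, du β ν * A β α μ) * uv μ * Xv ν
        = ∑ μ, ∑ β, du β ν * A β α μ * uv μ * Xv ν := by
          refine Finset.sum_congr rfl fun μ _ => ?_
          rw [Finset.sum_mul, Finset.sum_mul]
      _ = ∑ β, ∑ μ, du β ν * A β α μ * uv μ * Xv ν := Finset.sum_comm
      _ = ∑ β, ((du β ν * Xv ν) * ∑ μ, uv μ * A μ α β) := by
          refine Finset.sum_congr rfl fun β _ => ?_
          rw [Finset.mul_sum]
          exact Finset.sum_congr rfl fun μ _ => by rw [H5]; ring
      _ = ∑ β, N α β * du β ν * Xv ν := by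
          refine Finset.sum_congr rfl fun β _ => ?_
          rw [H6 β]; ring
  -- F3
  have F3 : (∑ ν, ∑ μ, (∑ β, du β ν * A β α μ) * Xv μ * uv ν)
      = fv * (∑ ν, N α ν * Xv ν)
        - ∑ β, ∑ μ, (∑ ρ, N ρ μ * A ρ α β) * Xv β * uv μ := by
    have step1 : (∑ ν, ∑ μ, (∑ β, du β ν * A β α μ) * Xv μ * uv ν)
        = ∑ ν, ∑ μ, ∑ β, du β ν * A β α μ * Xv μ * uv ν := by
      refine Finset.sum_congr rfl fun ν _ => Finset.sum_congr rfl fun μ _ => ?_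
      rw [Finset.sum_mul, Finset.sum_mul]
    have step2 : (∑ ν, ∑ μ, ∑ β, du β ν * A β α μ * Xv μ * uv ν)
        = (∑ ν, ∑ μ, ∑ β, P β ν * A β α μ * Xv μ * uv ν)
          - ∑ ν, ∑ μ, ∑ β, N β ν * A β α μ * Xv μ * uv ν := by
      simp only [← Finset.sum_sub_distrib]
      refine Finset.sum_congr rfl fun ν _ => Finset.sum_congr rfl fun μ _ =>
        Finset.sum_congr rfl fun β _ => ?_
      rw [HPd]; ring
    have t1 : (∑ ν, ∑ μ, ∑ β, P β ν * A β α μ * Xv μ * uv ν)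
        = fv * (∑ ν, N α ν * Xv ν) := by
      rw [Finset.sum_comm, Finset.mul_sum]
      refine Finset.sum_congr rfl fun μ _ => ?_
      rw [Finset.sum_comm]
      calc ∑ β, ∑ ν, P β ν * A β α μ * Xv μ * uv ν
          = ∑ β, ((A β α μ * Xv μ) * ∑ ν, P β ν * uv ν) := by
            refine Finset.sum_congr rfl fun β _ => ?_
            rw [Finset.mul_sum]
            exact Finset.sum_congr rfl fun ν _ => by ring
        _ = ∑ β, ((A β α μ * Xv μ) * (fv * uv β)) := by
            exact Finset.sum_congr rfl fun β _ => by rw [H3 β]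
        _ = (fv * Xv μ) * ∑ β, uv β * A β α μ := by
            rw [Finset.mul_sum]
            exact Finset.sum_congr rfl fun β _ => by ring
        _ = fv * (N α μ * Xv μ) := by rw [H6 μ]; ring
    have e13 : (∑ β, ∑ μ, (∑ ρ, N ρ μ * A ρ α β) * Xv β * uv μ)
        = ∑ β, ∑ μ, ∑ ρ, N ρ μ * A ρ α β * Xv β * uv μ := by
      refine Finset.sum_congr rfl fun β _ => Finset.sum_congr rfl fun μ _ => ?_
      rw [Finset.sum_mul, Finset.sum_mul]
    have t2 : (∑ ν, ∑ μ, ∑ β, N β ν * A β α μ * Xv μ * uv ν)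
        = ∑ β, ∑ μ, (∑ ρ, N ρ μ * A ρ α β) * Xv β * uv μ := by
      rw [e13]
      exact Finset.sum_comm
    rw [step1, step2, t1, t2]
  -- F4
  have F4 : (∑ μ, N α μ * (∑ ρ, P μ ρ * Xv ρ))
      = (∑ ν, ∑ μ, N α μ * du μ ν * Xv ν) + ∑ μ, ∑ ρ, N α μ * N μ ρ * Xv ρ := by
    have h1 : (∑ μ, N α μ * (∑ ρ, P μ ρ * Xv ρ))
        = ∑ μ, ∑ ρ, (N α μ * du μ ρ * Xv ρ + N α μ * N μ ρ * Xv ρ) := by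
      refine Finset.sum_congr rfl fun μ _ => ?_
      rw [Finset.mul_sum]
      exact Finset.sum_congr rfl fun ρ _ => by rw [HP]; ring
    rw [h1]
    simp only [Finset.sum_add_distrib]
    congr 1
    exact Finset.sum_comm
  -- F5
  have F5 : (∑ β, ∑ μ, (∑ ρ, N ρ β * A ρ α μ) * Xv β * uv μ)
      = ∑ μ, ∑ ρ, N α μ * N μ ρ * Xv ρ := by
    have h1 : (∑ β, ∑ μ, (∑ ρ, N ρ β * A ρ α μ) * Xv β * uv μ)
        = ∑ β, ∑ ρ, (N ρ β * Xv β) * N α ρ := by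
      refine Finset.sum_congr rfl fun β _ => ?_
      calc ∑ μ, (∑ ρ, N ρ β * A ρ α μ) * Xv β * uv μ
          = ∑ μ, ∑ ρ, N ρ β * A ρ α μ * Xv β * uv μ := by
            refine Finset.sum_congr rfl fun μ _ => ?_
            rw [Finset.sum_mul, Finset.sum_mul]
        _ = ∑ ρ, ∑ μ, N ρ β * A ρ α μ * Xv β * uv μ := Finset.sum_comm
        _ = ∑ ρ, ((N ρ β * Xv β) * ∑ μ, uv μ * A μ α ρ) := by
            refine Finset.sum_congr rfl fun ρ _ => ?_
            rw [Finset.mul_sum]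
            exact Finset.sum_congr rfl fun μ _ => by rw [H5]; ring
        _ = ∑ ρ, (N ρ β * Xv β) * N α ρ := by
            exact Finset.sum_congr rfl fun ρ _ => by rw [H6 ρ]
    rw [h1, Finset.sum_comm]
    exact Finset.sum_congr rfl fun a _ => Finset.sum_congr rfl fun b _ => by ring
  -- b1 = a3, b2 = a4
  have Fb1 : (∑ β, ∑ μ, B2 β α μ * Xv β * uv μ) = ∑ ν, ∑ μ, B2 ν α μ * uv μ * Xv ν :=
    Finset.sum_congr rfl fun β _ => Finset.sum_congr rfl fun μ _ => by ring
  have Fb2 : (∑ β, ∑ μ, B2 μ α β * Xv β * uv μ) = ∑ ν, ∑ μ, B2 ν α μ * Xv μ * uv ν :=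
    Finset.sum_comm
  rw [F2] at K
  rw [E3, E5, E6, F1, F3, F4, F5, Fb1, Fb2, E2]
  linarith [K]

end PF


/-- Theorem (Thm. 2.3, Eq. (com)): for a pregeodesic field `u` (`D_u u = f·u`),
`D_X (D̃_u u) − D̃_u (D_X u) − D_{[X,u]} u = R_u(X)`, where the first term is
Leibniz-expanded as `(∂_X f)·u + f·D_X u`. -/
theorem statement2 {m : ℕ} (hm : 2 ≤ m)
    (Ω : Set (Vec m × Vec m)) (hΩopen : IsOpen Ω) (hΩne : Ω.Nonempty)
    (hΩslit : ∀ p ∈ Ω, p.2 ≠ 0)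
    (hΩcone : ∀ p ∈ Ω, ∀ s : ℝ, 0 < s → (p.1, s • p.2) ∈ Ω)
    (L : Vec m → Vec m → ℝ)
    (hLsmooth : ContDiffOn ℝ (⊤ : ℕ∞) (fun p : Vec m × Vec m => L p.1 p.2) Ω)
    (hLhom : ∀ p ∈ Ω, ∀ s : ℝ, 0 < s → L p.1 (s • p.2) = s ^ 2 * L p.1 p.2)
    (hLinv : ∀ p ∈ Ω, IsUnit (gmet L p.1 p.2).det)
    (U : Set (Vec m)) (hUopen : IsOpen U)
    (u : Vec m → Vec m) (husmooth : ContDiffOn ℝ (⊤ : ℕ∞) u U)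
    (huΩ : ∀ x ∈ U, (x, u x) ∈ Ω)
    (X : Vec m → Vec m) (hXsmooth : ContDiffOn ℝ (⊤ : ℕ∞) X U)
    (f : Vec m → ℝ) (hfsmooth : ContDiffOn ℝ (⊤ : ℕ∞) f U)
    (hpregeo : ∀ x ∈ U, ∀ α, covD L u u x α = f x * u x α) :
    ∀ x ∈ U, ∀ α,
      (dirD X f x * u x α + f x * covD L u X x α)
        - flipD L u (covD L u X) x α - covD L u (lieB X u) x α
        = curvEndoField L u X x α := by
  intro x hxU α
  have hΩx : (x, u x) ∈ Ω := huΩ x hxU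
  have hone : ((⊤:ℕ∞) : WithTop ℕ∞) ≠ 0 := by simp
  have hL : PF.SM Ω L := hLsmooth.of_le (by simp)
  -- smoothness of the metric, inverse metric, spray and nonlinear connection
  have hgmet : ∀ δ γ : Fin m, PF.SM Ω (fun y v => gmet L y v δ γ) := fun δ γ =>
    PF.SM.pdv hΩopen (PF.SM.pdv hΩopen hL γ) δ
  have hginv : ∀ a δ : Fin m, PF.SM Ω (fun y v => ginv L y v a δ) := fun a δ =>
    PF.sm_inv_entry (M := fun p : Vec m × Vec m => gmet L p.1 p.2) (fun i j => hgmet i j)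
      hLinv a δ
  have hpdxg : ∀ (β δ γ : Fin m), PF.SM Ω (pdx (fun y w => gmet L y w δ γ) β) := fun β δ γ =>
    PF.SM.pdx hΩopen (hgmet δ γ) β
  have hvcoord : ∀ β : Fin m, ContDiffOn ℝ (⊤:ℕ∞) (fun p : Vec m × Vec m => p.2 β) Ω :=
    fun β => ((contDiff_pi.mp contDiff_snd) β).contDiffOn
  have hspray : ∀ a : Fin m, PF.SM Ω (spray L a) := by
    intro a
    have h : ContDiffOn ℝ (⊤:ℕ∞) (fun p : Vec m × Vec m =>
        (1/4 : ℝ) * ∑ δ, ginv L p.1 p.2 a δ *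
          (∑ β, ∑ γ,
            (pdx (fun y w => gmet L y w δ γ) β p.1 p.2
              + pdx (fun y w => gmet L y w δ β) γ p.1 p.2
              - pdx (fun y w => gmet L y w β γ) δ p.1 p.2) * p.2 β * p.2 γ)) Ω := by
      refine contDiffOn_const.mul (ContDiffOn.sum fun δ _ => (hginv a δ).mul
        (ContDiffOn.sum fun β _ => ContDiffOn.sum fun γ _ => ?_))
      exact ((((hpdxg β δ γ).add (hpdxg γ δ β)).sub (hpdxg δ β γ)).mul
        (hvcoord β)).mul (hvcoord γ)
    exact h
  have hnConn : ∀ a b : Fin m, PF.SM Ω (nConn L a b) := fun a b =>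
    PF.SM.pdv hΩopen (hspray a) b
  -- homogeneity chain
  have hpdvL_hom : ∀ γ : Fin m, ∀ p ∈ Ω, ∀ s : ℝ, 0 < s →
      pdv L γ p.1 (s • p.2) = s ^ 1 * pdv L γ p.1 p.2 := by
    intro γ p hp s hs
    have h := PF.pdv_hom hΩopen hΩcone hL (k := 2) (by norm_num) hLhom γ p hp s hs
    simpa using h
  have hgmet_hom : ∀ p ∈ Ω, ∀ s : ℝ, 0 < s → gmet L p.1 (s • p.2) = gmet L p.1 p.2 := by
    intro p hp s hs
    ext δ γ
    show pdv (pdv L γ) δ p.1 (s • p.2) = pdv (pdv L γ) δ p.1 p.2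
    have h := PF.pdv_hom hΩopen hΩcone (PF.SM.pdv hΩopen hL γ) (k := 1) le_rfl
      (fun q hq t ht => by simpa using hpdvL_hom γ q hq t ht) δ p hp s hs
    simpa using h
  have hginv_hom : ∀ p ∈ Ω, ∀ s : ℝ, 0 < s → ginv L p.1 (s • p.2) = ginv L p.1 p.2 := by
    intro p hp s hs
    unfold ginv
    rw [hgmet_hom p hp s hs]
  have hpdxg_hom : ∀ (β δ γ : Fin m), ∀ p ∈ Ω, ∀ s : ℝ, 0 < s →
      pdx (fun y w => gmet L y w δ γ) β p.1 (s • p.2)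
        = pdx (fun y w => gmet L y w δ γ) β p.1 p.2 := by
    intro β δ γ p hp s hs
    have h := PF.pdx_hom hΩopen (hgmet δ γ) (k := 0)
      (fun q hq t ht => by
        show gmet L q.1 (t • q.2) δ γ = t ^ 0 * gmet L q.1 q.2 δ γ
        rw [hgmet_hom q hq t ht, pow_zero, one_mul]) β p hp s hs
    simpa using h
  have hspray_hom : ∀ a : Fin m, ∀ p ∈ Ω, ∀ s : ℝ, 0 < s →
      spray L a p.1 (s • p.2) = s ^ 2 * spray L a p.1 p.2 := by
    rintro a ⟨x', v⟩ hp s hs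
    have inner : ∀ δ, (∑ β, ∑ γ,
        (pdx (fun y w => gmet L y w δ γ) β x' (s • v)
          + pdx (fun y w => gmet L y w δ β) γ x' (s • v)
          - pdx (fun y w => gmet L y w β γ) δ x' (s • v)) * (s • v) β * (s • v) γ)
        = s ^ 2 * ∑ β, ∑ γ,
        (pdx (fun y w => gmet L y w δ γ) β x' v
          + pdx (fun y w => gmet L y w δ β) γ x' v
          - pdx (fun y w => gmet L y w β γ) δ x' v) * v β * v γ := by
      intro δ
      rw [Finset.mul_sum]
      refine Finset.sum_congr rfl fun β _ => ?_
      rw [Finset.mul_sum]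
      refine Finset.sum_congr rfl fun γ _ => ?_
      rw [hpdxg_hom β δ γ _ hp s hs, hpdxg_hom γ δ β _ hp s hs, hpdxg_hom δ β γ _ hp s hs]
      simp only [Pi.smul_apply, smul_eq_mul]
      ring
    show (1/4 : ℝ) * ∑ δ, ginv L x' (s • v) a δ * (∑ β, ∑ γ,
        (pdx (fun y w => gmet L y w δ γ) β x' (s • v)
          + pdx (fun y w => gmet L y w δ β) γ x' (s • v)
          - pdx (fun y w => gmet L y w β γ) δ x' (s • v)) * (s • v) β * (s • v) γ)
      = s ^ 2 * ((1/4 : ℝ) * ∑ δ, ginv L x' v a δ * (∑ β, ∑ γ,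
        (pdx (fun y w => gmet L y w δ γ) β x' v
          + pdx (fun y w => gmet L y w δ β) γ x' v
          - pdx (fun y w => gmet L y w β γ) δ x' v) * v β * v γ))
    have step : ∀ δ, ginv L x' (s • v) a δ * (∑ β, ∑ γ,
        (pdx (fun y w => gmet L y w δ γ) β x' (s • v)
          + pdx (fun y w => gmet L y w δ β) γ x' (s • v)
          - pdx (fun y w => gmet L y w β γ) δ x' (s • v)) * (s • v) β * (s • v) γ)
        = s ^ 2 * (ginv L x' v a δ * (∑ β, ∑ γ,
        (pdx (fun y w => gmet L y w δ γ) β x' v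
          + pdx (fun y w => gmet L y w δ β) γ x' v
          - pdx (fun y w => gmet L y w β γ) δ x' v) * v β * v γ)) := by
      intro δ
      rw [hginv_hom (x', v) hp s hs, inner δ]
      ring
    rw [Finset.sum_congr rfl fun δ _ => step δ, ← Finset.mul_sum]
    ring
  have hnConn_hom : ∀ a b : Fin m, ∀ p ∈ Ω, ∀ s : ℝ, 0 < s →
      nConn L a b p.1 (s • p.2) = s * nConn L a b p.1 p.2 := by
    intro a b p hp s hs
    have h := PF.pdv_hom hΩopen hΩcone (hspray a) (k := 2) (by norm_num)
      (hspray_hom a) b p hp s hs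
    simpa [nConn] using h
  -- Euler identity and symmetry of the v-derivatives of N
  have hEuler : ∀ a b : Fin m,
      ∑ ρ, u x ρ * pdv (nConn L a b) ρ x (u x) = nConn L a b x (u x) := fun a b =>
    PF.euler hΩopen (hnConn a b) (fun p hp s hs => hnConn_hom a b p hp s hs) hΩx
  have hAsym : ∀ r b : Fin m,
      pdv (nConn L α b) r x (u x) = pdv (nConn L α r) b x (u x) := fun r b =>
    PF.pdv_comm hΩopen (hspray α) hΩx b r
  -- differentiability of the data at x
  have hux : ContDiffAt ℝ (⊤:ℕ∞) u x := (husmooth.contDiffAt (hUopen.mem_nhds hxU)).of_le (by simp)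
  have hXx : ContDiffAt ℝ (⊤:ℕ∞) X x := (hXsmooth.contDiffAt (hUopen.mem_nhds hxU)).of_le (by simp)
  have hfx : ContDiffAt ℝ (⊤:ℕ∞) f x := (hfsmooth.contDiffAt (hUopen.mem_nhds hxU)).of_le (by simp)
  have hud : DifferentiableAt ℝ u x := hux.differentiableAt hone
  have hXd : DifferentiableAt ℝ X x := hXx.differentiableAt hone
  have hfd : DifferentiableAt ℝ f x := hfx.differentiableAt hone
  have hcoord : ∀ (V : Vec m → Vec m), DifferentiableAt ℝ V x →
      ∀ a, DifferentiableAt ℝ (fun y => V y a) x := fun V hV a =>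
    (ContinuousLinearMap.proj (R := ℝ) (φ := fun _ : Fin m => ℝ) a).differentiableAt.comp x hV
  have hpdeV : ∀ (V : Vec m → Vec m), DifferentiableAt ℝ V x →
      ∀ a b, pde V a b x = fderiv ℝ V x (Pi.single b 1) a := by
    intro V hV a b
    show fderiv ℝ (fun y => V y a) x (Pi.single b 1) = _
    rw [show (fun y => V y a)
        = (⇑(ContinuousLinearMap.proj (R := ℝ) (φ := fun _ : Fin m => ℝ) a)) ∘ V from rfl]
    rw [(((ContinuousLinearMap.proj (R := ℝ) (φ := fun _ : Fin m => ℝ) a).hasFDerivAt).comp x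
      hV.hasFDerivAt).fderiv]
    rfl
  have hucoord : ∀ a, ContDiffAt ℝ (⊤:ℕ∞) (fun y => u y a) x := fun a =>
    ((ContinuousLinearMap.proj (R := ℝ) (φ := fun _ : Fin m => ℝ) a).contDiff.contDiffAt).comp
      x hux
  have hdiff_pde : ∀ a b, DifferentiableAt ℝ (fun y => pde u a b y) x := by
    intro a b
    have h1 : ContDiffAt ℝ (⊤:ℕ∞) (fderiv ℝ (fun z => u z a)) x :=
      (hucoord a).fderiv_right (by exact_mod_cast le_top)
    exact (h1.differentiableAt hone).clm_apply (differentiableAt_const _)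
  have hd2sym : ∀ a b c, fderiv ℝ (fun y => pde u a b y) x (Pi.single c 1)
      = fderiv ℝ (fun y => pde u a c y) x (Pi.single b 1) := fun a b c =>
    PF.clairaut (hucoord a) (Pi.single b 1) (Pi.single c 1)
  have hNdiff : ∀ a b, DifferentiableAt ℝ (fun y => nConn L a b y (u y)) x := fun a b =>
    PF.diff_comp_curve hΩopen (hnConn a b) hud hΩx
  have hNfderiv : ∀ a b ν, fderiv ℝ (fun y => nConn L a b y (u y)) x (Pi.single ν 1)
      = pdx (nConn L a b) ν x (u x)
        + ∑ β, pde u β ν x * pdv (nConn L a b) β x (u x) := by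
    intro a b ν
    rw [PF.fderiv_comp_curve hΩopen (hnConn a b) hud hΩx ν]
    congr 1
    exact Finset.sum_congr rfl fun β _ => by rw [hpdeV u hud β ν]
  -- the key derivative computation for covD
  have hcov : ∀ (V : Vec m → Vec m), DifferentiableAt ℝ V x → ∀ ν,
      fderiv ℝ (fun y => covD L u V y α) x (Pi.single ν 1)
        = ∑ μ, ((fderiv ℝ (fun y => pde u α μ y) x (Pi.single ν 1)
              + pdx (nConn L α μ) ν x (u x)
              + ∑ β, pde u β ν x * pdv (nConn L α μ) β x (u x)) * V x μ
            + (pde u α μ x + nConn L α μ x (u x)) * pde V μ ν x) := by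
    intro V hV ν
    have hVc : ∀ μ, DifferentiableAt ℝ (fun y => V y μ) x := hcoord V hV
    have hgdiff : ∀ μ, DifferentiableAt ℝ (fun y => pde u α μ y + nConn L α μ y (u y)) x :=
      fun μ => (hdiff_pde α μ).add (hNdiff α μ)
    have hterm : ∀ μ ∈ Finset.univ, DifferentiableAt ℝ
        (fun y => (pde u α μ y + nConn L α μ y (u y)) * V y μ) x :=
      fun μ _ => (hgdiff μ).mul (hVc μ)
    have e0 : (fun y => covD L u V y α)
        = fun y => ∑ μ, (pde u α μ y + nConn L α μ y (u y)) * V y μ := rfl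
    rw [e0, fderiv_fun_sum hterm, ContinuousLinearMap.sum_apply]
    refine Finset.sum_congr rfl fun μ _ => ?_
    rw [fderiv_fun_mul (hgdiff μ) (hVc μ)]
    simp only [ContinuousLinearMap.add_apply, ContinuousLinearMap.smul_apply, smul_eq_mul]
    rw [fderiv_fun_add (hdiff_pde α μ) (hNdiff α μ), ContinuousLinearMap.add_apply,
      hNfderiv α μ ν]
    simp only [pde]
    ring
  -- differentiated pregeodesic equation
  have hprederiv : ∀ ν, ∑ μ, ((fderiv ℝ (fun y => pde u α μ y) x (Pi.single ν 1)
        + pdx (nConn L α μ) ν x (u x)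
        + ∑ β, pde u β ν x * pdv (nConn L α μ) β x (u x)) * u x μ
      + (pde u α μ x + nConn L α μ x (u x)) * pde u μ ν x)
      = fderiv ℝ f x (Pi.single ν 1) * u x α + f x * pde u α ν x := by
    intro ν
    rw [← hcov u hud ν]
    have hee : (fun y => covD L u u y α) =ᶠ[nhds x] (fun y => f y * u y α) := by
      filter_upwards [hUopen.mem_nhds hxU] with y hy
      exact hpregeo y hy α
    rw [hee.fderiv_eq, fderiv_fun_mul hfd (hcoord u hud α)]
    simp only [ContinuousLinearMap.add_apply, ContinuousLinearMap.smul_apply, smul_eq_mul]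
    simp only [pde]
    ring
  -- apply the algebraic identity
  have halg := PF.main_algebra
    (fun a b => pde u a b x + nConn L a b x (u x))
    (fun a b => nConn L a b x (u x))
    (fun r a b => pdv (nConn L a b) r x (u x))
    (fun n a b => pdx (nConn L a b) n x (u x))
    (fun a b c => fderiv ℝ (fun y => pde u a b y) x (Pi.single c 1))
    (fun a b => pde u a b x)
    (fun a b => pde X a b x)
    (u x) (X x)
    (fun n => fderiv ℝ f x (Pi.single n 1))
    (f x) α
    (fun ν => hprederiv ν)
    (fun a => hpregeo x hxU a)
    (fun b c => hd2sym α b c)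
    (fun r b => hAsym r b)
    (fun b => hEuler α b)
    (fun a b => rfl)
  have eflip : flipD L u (covD L u X) x α
      = (∑ ν, (∑ μ, ((fderiv ℝ (fun y => pde u α μ y) x (Pi.single ν 1)
              + pdx (nConn L α μ) ν x (u x)
              + ∑ β, pde u β ν x * pdv (nConn L α μ) β x (u x)) * X x μ
            + (pde u α μ x + nConn L α μ x (u x)) * pde X μ ν x)) * u x ν)
        + ∑ μ, nConn L α μ x (u x)
            * (∑ ρ, (pde u μ ρ x + nConn L μ ρ x (u x)) * X x ρ) := by
    show (∑ ν, pde (covD L u X) α ν x * u x ν)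
        + ∑ μ, nConn L α μ x (u x) * covD L u X x μ = _
    exact congrArg₂ (· + ·)
      (Finset.sum_congr rfl fun ν _ => congrArg (· * u x ν) (hcov X hXd ν)) rfl
  rw [eflip]
  exact halg
end
end
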